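/- arXiv:2002.11615 — 6 statements merged into one kernel-verified Lean document; each statement's English description precedes it below -/
import Mathlib

section
/- For all integers n, m ≥ 3, N_{n-2,m-2}(X^D) ≤ D_{n,m} ≤ N_{n,m}(X^D), where N_{n,m}(X^D) denotes the number of globally admissible n×m patterns of the domination subshift X^D and D_{n,m} is the number of dominating sets of the n×m grid graph. In particular, any dominating set of the n×m grid extends to a configuration of the domination subshift of Z² by setting all positions outside the grid to be dominant. -/
/-- Grid adjacency on `ℤ²`. -/
def z2Adj (u v : ℤ × ℤ) : Prop :=
  |u.1 - v.1| + |u.2 - v.2| = 1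

/-- Grid adjacency on the finite grid. -/
def gridAdj {n m : ℕ} (u v : Fin n × Fin m) : Prop :=
  |(u.1 : ℤ) - (v.1 : ℤ)| + |(u.2 : ℤ) - (v.2 : ℤ)| = 1

/-- A dominating set of the infinite grid `ℤ²`. -/
def DomZ2 (S : Set (ℤ × ℤ)) : Prop :=
  ∀ v : ℤ × ℤ, v ∈ S ∨ ∃ u ∈ S, z2Adj u v

/-- The domination subshift `X^D`. -/
def XD : Set (ℤ × ℤ → Bool) :=
  {x | DomZ2 {u | x u = true}}

/-- `N_{n,m}(X^D)`: the number of globally-admissible `n × m` patterns of `X^D`. -/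
noncomputable def ND (n m : ℕ) : ℕ :=
  Nat.card {p : Fin n × Fin m → Bool //
    ∃ x ∈ XD, ∀ ij : Fin n × Fin m, p ij = x (((ij.1 : ℤ) + 1), ((ij.2 : ℤ) + 1))}

/-- A dominating set of the `n × m` grid graph. -/
def DomGrid {n m : ℕ} (S : Set (Fin n × Fin m)) : Prop :=
  ∀ v : Fin n × Fin m, v ∈ S ∨ ∃ u ∈ S, gridAdj u v

/-- `D_{n,m}`: the number of dominating sets of the `n × m` grid graph. -/
noncomputable def Dnum (n m : ℕ) : ℕ :=
  Nat.card {S : Set (Fin n × Fin m) // DomGrid S}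

open Classical in
/-- The extension of a grid set to `ℤ²`: all-ones outside the box. -/
noncomputable def extCfg {n m : ℕ} (S : Set (Fin n × Fin m)) : ℤ × ℤ → Bool :=
  fun u => decide (∀ ij : Fin n × Fin m, ((ij.1 : ℤ) + 1, (ij.2 : ℤ) + 1) = u → ij ∈ S)

lemma extCfg_at {n m : ℕ} (S : Set (Fin n × Fin m)) (ij : Fin n × Fin m) :
    extCfg S ((ij.1 : ℤ) + 1, (ij.2 : ℤ) + 1) = true ↔ ij ∈ S := by
  simp only [extCfg, decide_eq_true_iff]
  constructor
  · intro h; exact h ij rfl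
  · intro h ij' hij'
    have h1 : (ij'.1 : ℤ) + 1 = (ij.1 : ℤ) + 1 := congrArg Prod.fst hij'
    have h2 : (ij'.2 : ℤ) + 1 = (ij.2 : ℤ) + 1 := congrArg Prod.snd hij'
    have e1 : ij'.1 = ij.1 := Fin.ext (by omega)
    have e2 : ij'.2 = ij.2 := Fin.ext (by omega)
    have : ij' = ij := Prod.ext e1 e2
    rwa [this]

lemma extCfg_outside {n m : ℕ} (S : Set (Fin n × Fin m)) (u : ℤ × ℤ)
    (h : ¬ (1 ≤ u.1 ∧ u.1 ≤ (n : ℤ) ∧ 1 ≤ u.2 ∧ u.2 ≤ (m : ℤ))) : extCfg S u = true := by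
  simp only [extCfg, decide_eq_true_iff]
  intro ij hij
  exfalso
  apply h
  have b1 := ij.1.isLt
  have b2 := ij.2.isLt
  rw [← hij]
  refine ⟨by omega, by omega, by omega, by omega⟩

lemma extCfg_mem {n m : ℕ} (S : Set (Fin n × Fin m)) (hS : DomGrid S) :
    extCfg S ∈ XD := by
  intro v
  by_cases hv : 1 ≤ v.1 ∧ v.1 ≤ (n : ℤ) ∧ 1 ≤ v.2 ∧ v.2 ≤ (m : ℤ)
  · have h1 : (v.1 - 1).toNat < n := by omega
    have h2 : (v.2 - 1).toNat < m := by omega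
    set ij : Fin n × Fin m := (⟨(v.1 - 1).toNat, h1⟩, ⟨(v.2 - 1).toNat, h2⟩) with hij
    have hco : ((ij.1 : ℤ) + 1, (ij.2 : ℤ) + 1) = v := by
      have : ((ij.1 : ℤ) + 1) = v.1 := by simp [hij]; omega
      have : ((ij.2 : ℤ) + 1) = v.2 := by simp [hij]; omega
      ext <;> simp [hij] <;> omega
    rcases hS ij with h | ⟨u, hu, hadj⟩
    · left
      show extCfg S v = true
      rw [← hco]
      exact (extCfg_at S ij).mpr h
    · right
      refine ⟨((u.1 : ℤ) + 1, (u.2 : ℤ) + 1), (extCfg_at S u).mpr hu, ?_⟩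
      have hz : z2Adj ((u.1 : ℤ) + 1, (u.2 : ℤ) + 1) ((ij.1 : ℤ) + 1, (ij.2 : ℤ) + 1) := by
        unfold z2Adj
        unfold gridAdj at hadj
        convert hadj using 2 <;> ring
      rwa [hco] at hz
  · left
    exact extCfg_outside S v hv

/-- Embed `Fin (n-2) × Fin (m-2)` into the interior of `Fin n × Fin m`. -/
def embV {n m : ℕ} (ab : Fin (n - 2) × Fin (m - 2)) : Fin n × Fin m :=
  (⟨ab.1.val + 1, by have := ab.1.isLt; omega⟩, ⟨ab.2.val + 1, by have := ab.2.isLt; omega⟩)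

/-- Grid set built from a pattern: all boundary cells plus the interior cells where
the pattern is 1. -/
def bigS (n m : ℕ) (p : Fin (n - 2) × Fin (m - 2) → Bool) : Set (Fin n × Fin m) :=
  {v | v.1.val = 0 ∨ v.1.val = n - 1 ∨ v.2.val = 0 ∨ v.2.val = m - 1 ∨
    ∃ ab : Fin (n - 2) × Fin (m - 2), p ab = true ∧
      v.1.val = ab.1.val + 1 ∧ v.2.val = ab.2.val + 1}

lemma mem_bigS_iff {n m : ℕ} (p : Fin (n - 2) × Fin (m - 2) → Bool)
    (ab : Fin (n - 2) × Fin (m - 2)) : embV ab ∈ bigS n m p ↔ p ab = true := by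
  have h1 := ab.1.isLt
  have h2 := ab.2.isLt
  simp only [bigS, embV, Set.mem_setOf_eq]
  constructor
  · rintro (h | h | h | h | ⟨ab', hp, e1, e2⟩)
    · omega
    · omega
    · omega
    · omega
    · have e1' : ab'.1 = ab.1 := Fin.ext (by omega)
      have e2' : ab'.2 = ab.2 := Fin.ext (by omega)
      have : ab' = ab := Prod.ext e1' e2'
      rwa [this] at hp
  · intro hp
    exact Or.inr (Or.inr (Or.inr (Or.inr ⟨ab, hp, rfl, rfl⟩)))

lemma bigS_dom {n m : ℕ} (hn : 3 ≤ n) (hm : 3 ≤ m)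
    (p : Fin (n - 2) × Fin (m - 2) → Bool) (x : ℤ × ℤ → Bool) (hx : x ∈ XD)
    (hpx : ∀ ij : Fin (n - 2) × Fin (m - 2),
      p ij = x (((ij.1 : ℤ) + 1), ((ij.2 : ℤ) + 1))) :
    DomGrid (bigS n m p) := by
  intro v
  by_cases hb : v.1.val = 0 ∨ v.1.val = n - 1 ∨ v.2.val = 0 ∨ v.2.val = m - 1
  · left
    simp only [bigS, Set.mem_setOf_eq]
    tauto
  · push_neg at hb
    obtain ⟨h10, h1n, h20, h2m⟩ := hb
    have hv1 : 1 ≤ v.1.val ∧ v.1.val ≤ n - 2 := by have := v.1.isLt; omega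
    have hv2 : 1 ≤ v.2.val ∧ v.2.val ≤ m - 2 := by have := v.2.isLt; omega
    set a : Fin (n - 2) := ⟨v.1.val - 1, by omega⟩ with ha
    set b : Fin (m - 2) := ⟨v.2.val - 1, by omega⟩ with hbb
    have hco : (((a : ℤ) + 1), ((b : ℤ) + 1)) = (((v.1.val : ℤ)), ((v.2.val : ℤ))) := by
      ext <;> simp [ha, hbb] <;> omega
    rcases hx ((v.1.val : ℤ), (v.2.val : ℤ)) with hmem | ⟨u, hu, hadj⟩
    · left
      have hxv : x (((a : ℤ) + 1), ((b : ℤ) + 1)) = true := by rw [hco]; exact hmem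
      have hp : p (a, b) = true := by rw [hpx (a, b)]; exact hxv
      have hev : embV (n := n) (m := m) (a, b) = v := by
        have e1 : (embV (n := n) (m := m) (a, b)).1 = v.1 := Fin.ext (by simp [embV, ha]; omega)
        have e2 : (embV (n := n) (m := m) (a, b)).2 = v.2 := Fin.ext (by simp [embV, hbb]; omega)
        exact Prod.ext e1 e2
      rw [← hev]
      exact (mem_bigS_iff p (a, b)).mpr hp
    · right
      have hxu : x u = true := hu
      have habs : |u.1 - (v.1.val : ℤ)| + |u.2 - (v.2.val : ℤ)| = 1 := hadj
      have ha2 : (0 : ℤ) ≤ |u.2 - (v.2.val : ℤ)| := abs_nonneg _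
      have ha1' : (0 : ℤ) ≤ |u.1 - (v.1.val : ℤ)| := abs_nonneg _
      have ha1 : |u.1 - (v.1.val : ℤ)| ≤ 1 := by omega
      have ha2' : |u.2 - (v.2.val : ℤ)| ≤ 1 := by omega
      obtain ⟨l1, r1⟩ := abs_le.mp ha1
      obtain ⟨l2, r2⟩ := abs_le.mp ha2'
      have hu1 : 0 ≤ u.1 ∧ u.1 ≤ (n : ℤ) - 1 := by omega
      have hu2 : 0 ≤ u.2 ∧ u.2 ≤ (m : ℤ) - 1 := by omega
      set w : Fin n × Fin m := (⟨u.1.toNat, by omega⟩, ⟨u.2.toNat, by omega⟩) with hw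
      have hwv1 : ((w.1.val : ℤ)) = u.1 := by simp [hw]; omega
      have hwv2 : ((w.2.val : ℤ)) = u.2 := by simp [hw]; omega
      refine ⟨w, ?_, ?_⟩
      · by_cases hwb : u.1 = 0 ∨ u.1 = (n : ℤ) - 1 ∨ u.2 = 0 ∨ u.2 = (m : ℤ) - 1
        · simp only [bigS, Set.mem_setOf_eq]
          rcases hwb with h | h | h | h
          · exact Or.inl (by omega)
          · exact Or.inr (Or.inl (by omega))
          · exact Or.inr (Or.inr (Or.inl (by omega)))
          · exact Or.inr (Or.inr (Or.inr (Or.inl (by omega))))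
        · push_neg at hwb
          obtain ⟨g1, g2, g3, g4⟩ := hwb
          have hlt1 : u.1.toNat - 1 < n - 2 := by omega
          have hlt2 : u.2.toNat - 1 < m - 2 := by omega
          have hcou : (((((⟨u.1.toNat - 1, hlt1⟩ : Fin (n - 2)) : ℤ) + 1),
              (((⟨u.2.toNat - 1, hlt2⟩ : Fin (m - 2)) : ℤ) + 1)) : ℤ × ℤ) = u := by
            have e1 : (((⟨u.1.toNat - 1, hlt1⟩ : Fin (n - 2)) : ℤ) + 1) = u.1 := by
              simp only [Fin.val_mk]; omega
            have e2 : (((⟨u.2.toNat - 1, hlt2⟩ : Fin (m - 2)) : ℤ) + 1) = u.2 := by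
              simp only [Fin.val_mk]; omega
            exact Prod.ext e1 e2
          have hp' : p (⟨u.1.toNat - 1, hlt1⟩, ⟨u.2.toNat - 1, hlt2⟩) = true := by
            rw [hpx (⟨u.1.toNat - 1, hlt1⟩, ⟨u.2.toNat - 1, hlt2⟩)]
            rw [hcou]
            exact hxu
          have hev : embV (n := n) (m := m) (⟨u.1.toNat - 1, hlt1⟩, ⟨u.2.toNat - 1, hlt2⟩) = w := by
            refine Prod.ext (Fin.ext ?_) (Fin.ext ?_) <;> simp [embV, hw] <;> omega
          rw [← hev]
          exact (mem_bigS_iff p _).mpr hp'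
      · show |((w.1 : ℤ)) - ((v.1 : ℤ))| + |((w.2 : ℤ)) - ((v.2 : ℤ))| = 1
        rw [hwv1, hwv2]
        exact habs

open Classical in
/-- For `n, m ≥ 3`, `N_{n-2,m-2}(X^D) ≤ D_{n,m} ≤ N_{n,m}(X^D)`; moreover any
dominating set of the grid extends to a configuration of `X^D` by setting all
positions outside the grid to be dominant. -/
theorem domination_count_bounds (n m : ℕ) (hn : 3 ≤ n) (hm : 3 ≤ m) :
    (ND (n - 2) (m - 2) ≤ Dnum n m ∧ Dnum n m ≤ ND n m) ∧
    ∀ S : Set (Fin n × Fin m), DomGrid S →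
      ∃ x ∈ XD,
        (∀ ij : Fin n × Fin m,
          (x (((ij.1 : ℤ) + 1), ((ij.2 : ℤ) + 1)) = true ↔ ij ∈ S)) ∧
        (∀ u : ℤ × ℤ,
          ¬ (1 ≤ u.1 ∧ u.1 ≤ (n : ℤ) ∧ 1 ≤ u.2 ∧ u.2 ≤ (m : ℤ)) → x u = true) := by
  constructor
  · constructor
    · -- ND (n-2) (m-2) ≤ Dnum n m
      have hinj : Function.Injective
          (fun q : {p : Fin (n - 2) × Fin (m - 2) → Bool //
              ∃ x ∈ XD, ∀ ij : Fin (n - 2) × Fin (m - 2),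
                p ij = x (((ij.1 : ℤ) + 1), ((ij.2 : ℤ) + 1))} =>
            (⟨bigS n m q.1, by
              obtain ⟨x, hx, hpx⟩ := q.2
              exact bigS_dom hn hm q.1 x hx hpx⟩ :
              {S : Set (Fin n × Fin m) // DomGrid S})) := by
        rintro ⟨p, hp⟩ ⟨p', hp'⟩ h
        have hSS : bigS n m p = bigS n m p' := congrArg Subtype.val h
        apply Subtype.ext
        funext ab
        have hiff : (p ab = true) ↔ (p' ab = true) := by
          rw [← mem_bigS_iff p ab, ← mem_bigS_iff p' ab, hSS]
        cases hab : p ab <;> cases hab' : p' ab <;> simp_all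
      exact Nat.card_le_card_of_injective _ hinj
    · -- Dnum n m ≤ ND n m
      have hinj : Function.Injective
          (fun q : {S : Set (Fin n × Fin m) // DomGrid S} =>
            (⟨fun ij => extCfg q.1 (((ij.1 : ℤ) + 1), ((ij.2 : ℤ) + 1)),
              ⟨extCfg q.1, extCfg_mem q.1 q.2, fun _ => rfl⟩⟩ :
              {p : Fin n × Fin m → Bool //
                ∃ x ∈ XD, ∀ ij : Fin n × Fin m,
                  p ij = x (((ij.1 : ℤ) + 1), ((ij.2 : ℤ) + 1))})) := by
        rintro ⟨S, hS⟩ ⟨S', hS'⟩ h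
        have hpp : (fun ij : Fin n × Fin m => extCfg S (((ij.1 : ℤ) + 1), ((ij.2 : ℤ) + 1)))
            = (fun ij : Fin n × Fin m => extCfg S' (((ij.1 : ℤ) + 1), ((ij.2 : ℤ) + 1))) :=
          congrArg Subtype.val h
        apply Subtype.ext
        show S = S'
        ext ij
        have hfun := congrFun hpp ij
        rw [← extCfg_at S ij, ← extCfg_at S' ij, hfun]
      exact Nat.card_le_card_of_injective _ hinj
  · intro S hS
    exact ⟨extCfg S, extCfg_mem S hS, extCfg_at S, extCfg_outside S⟩
end

section
/- For all n, m ≥ 1, the number M_{n,m} of minimal dominating sets of the n×m grid graph satisfies N_{n,m}(X^M)/2^{6(n+m)} ≤ M_{n,m} ≤ N_{n,m}(X^M), where N_{n,m}(X^M) is the number of n×m globally-admissible patterns of the minimal-domination subshift. -/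
/-- A minimal dominating set of the infinite grid `ℤ²`. -/
def MinDomZ2 (S : Set (ℤ × ℤ)) : Prop :=
  DomZ2 S ∧ ∀ v ∈ S, ¬ DomZ2 (S \ {v})

/-- The minimal-domination subshift `X^M`. -/
def XM : Set (ℤ × ℤ → Bool) :=
  {x | MinDomZ2 {u | x u = true}}

/-- `N_{n,m}(X^M)`: the number of globally-admissible `n × m` patterns of `X^M`. -/
noncomputable def NM (n m : ℕ) : ℕ :=
  Nat.card {p : Fin n × Fin m → Bool //
    ∃ x ∈ XM, ∀ ij : Fin n × Fin m, p ij = x (((ij.1 : ℤ) + 1), ((ij.2 : ℤ) + 1))}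

/-- A minimal dominating set of the `n × m` grid graph. -/
def MinDomGrid {n m : ℕ} (S : Set (Fin n × Fin m)) : Prop :=
  DomGrid S ∧ ∀ v ∈ S, ¬ DomGrid (S \ {v})

/-- `M_{n,m}`: the number of minimal dominating sets of the `n × m` grid graph. -/
noncomputable def Mnum (n m : ℕ) : ℕ :=
  Nat.card {S : Set (Fin n × Fin m) // MinDomGrid S}

/-! Upper bound: a minimal dominating set of the grid, placed in the window `[1, n] × [1, m]`,
extends to a minimal dominating set of `ℤ²` by adding lines three apart outside the window, which
neither dominate the window nor are dominated from it; distinct sets give distinct patterns.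

Lower bound: the trace of a configuration of `X^M` on the grid, together with the border of the
grid, dominates the grid. Shrinking it to a minimal dominating set keeps every cell at distance
three from the border, because the private neighbour of such a cell in `ℤ²` stays private. So a
pattern is determined by a minimal dominating set of the grid and its values on the at most
`6 (n + m)` cells near the border. -/

section Domination

variable {α β : Type*} {adj : α → α → Prop} {adj' : β → β → Prop} {S T A K : Set α}
  {v w : α}

def IsDominating (adj : α → α → Prop) (S : Set α) : Prop :=
  ∀ v, v ∈ S ∨ ∃ u ∈ S, adj u v

def IsMinimalDominating (adj : α → α → Prop) (S : Set α) : Prop :=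
  IsDominating adj S ∧ ∀ v ∈ S, ¬ IsDominating adj (S \ {v})

def IsPrivateNeighbor (adj : α → α → Prop) (S : Set α) (v w : α) : Prop :=
  (v = w ∨ adj v w) ∧ ∀ u ∈ S, u = w ∨ adj u w → u = v

theorem isDominating_iff : IsDominating adj S ↔ ∀ v, ∃ u ∈ S, u = v ∨ adj u v := by
  refine forall_congr' fun v => ⟨?_, ?_⟩
  · rintro (hv | ⟨u, hu, huv⟩)
    exacts [⟨v, hv, Or.inl rfl⟩, ⟨u, hu, Or.inr huv⟩]
  · rintro ⟨u, hu, rfl | huv⟩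
    exacts [Or.inl hu, Or.inr ⟨u, hu, huv⟩]

theorem IsPrivateNeighbor.not_isDominating_diff (h : IsPrivateNeighbor adj S v w) :
    ¬ IsDominating adj (S \ {v}) := fun hdom =>
  let ⟨u, ⟨huS, huv⟩, huw⟩ := isDominating_iff.1 hdom w
  huv (h.2 u huS huw)

theorem IsPrivateNeighbor.mono (h : IsPrivateNeighbor adj S v w) (hTS : T ⊆ S) :
    IsPrivateNeighbor adj T v w :=
  ⟨h.1, fun u hu => h.2 u (hTS hu)⟩

theorem IsPrivateNeighbor.union (h : IsPrivateNeighbor adj S v w)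
    (hT : ∀ u ∈ T, ¬ (u = w ∨ adj u w)) : IsPrivateNeighbor adj (S ∪ T) v w :=
  ⟨h.1, fun u hu huw => hu.elim (h.2 u · huw) fun huT => absurd huw (hT u huT)⟩

theorem IsPrivateNeighbor.image {f : α → β} (hf : f.Injective)
    (hadj : ∀ a b, adj' (f a) (f b) ↔ adj a b) (h : IsPrivateNeighbor adj S v w) :
    IsPrivateNeighbor adj' (f '' S) (f v) (f w) := by
  refine ⟨by rw [hf.eq_iff, hadj]; exact h.1, ?_⟩
  rintro _ ⟨u, hu, rfl⟩ huw
  rw [hf.eq_iff, hadj] at huw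
  rw [h.2 u hu huw]

theorem IsPrivateNeighbor.preimage {f : β → α} (hf : f.Injective)
    (hadj : ∀ a b, adj (f a) (f b) ↔ adj' a b) {v w : β}
    (h : IsPrivateNeighbor adj S (f v) (f w)) : IsPrivateNeighbor adj' (f ⁻¹' S) v w := by
  refine ⟨by rw [← hf.eq_iff, ← hadj]; exact h.1, fun u hu huw => hf (h.2 (f u) hu ?_)⟩
  rwa [hf.eq_iff, hadj]

theorem IsMinimalDominating.exists_isPrivateNeighbor (h : IsMinimalDominating adj S)
    (hv : v ∈ S) : ∃ w, IsPrivateNeighbor adj S v w := by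
  obtain ⟨w, hw⟩ := not_forall.1 (mt isDominating_iff.2 (h.2 v hv))
  have hpriv : ∀ u ∈ S, u = w ∨ adj u w → u = v := fun u hu huw =>
    by_contra fun huv => hw ⟨u, ⟨hu, huv⟩, huw⟩
  obtain ⟨u, hu, huw⟩ := isDominating_iff.1 h.1 w
  exact ⟨w, hpriv u hu huw ▸ huw, hpriv⟩

theorem IsDominating.isMinimalDominating (hS : IsDominating adj S)
    (h : ∀ v ∈ S, ∃ w, IsPrivateNeighbor adj S v w) : IsMinimalDominating adj S :=
  ⟨hS, fun v hv => (h v hv).elim fun _ hw => hw.not_isDominating_diff⟩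

theorem exists_isMinimalDominating_between [Finite α] (hA : IsDominating adj A) (hKA : K ⊆ A)
    (hK : ∀ v ∈ K, ∃ w, IsPrivateNeighbor adj A v w) :
    ∃ D, IsMinimalDominating adj D ∧ K ⊆ D ∧ D ⊆ A := by
  obtain ⟨D, hDA, ⟨hD, hKD⟩, hmin⟩ :=
    exists_minimal_le_of_wellFoundedLT (fun D => IsDominating adj D ∧ K ⊆ D) A ⟨hA, hKA⟩
  refine ⟨D, ⟨hD, fun v hv hdom => ?_⟩, hKD, hDA⟩
  by_cases hvK : v ∈ K
  · obtain ⟨w, hw⟩ := hK v hvK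
    exact (hw.mono hDA).not_isDominating_diff hdom
  · have hDv : D ⊆ D \ {v} :=
      hmin ⟨hdom, fun u hu => ⟨hKD hu, fun huv => hvK (huv ▸ hu)⟩⟩ Set.sdiff_subset
    exact (hDv hv).2 rfl

end Domination

theorem minDomZ2_iff {S : Set (ℤ × ℤ)} : MinDomZ2 S ↔ IsMinimalDominating z2Adj S := Iff.rfl

theorem minDomGrid_iff {n m : ℕ} {S : Set (Fin n × Fin m)} :
    MinDomGrid S ↔ IsMinimalDominating gridAdj S := Iff.rfl

theorem eq_or_z2Adj_iff {u v : ℤ × ℤ} : u = v ∨ z2Adj u v ↔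
    u.1 = v.1 ∧ v.2 - 1 ≤ u.2 ∧ u.2 ≤ v.2 + 1 ∨ u.2 = v.2 ∧ v.1 - 1 ≤ u.1 ∧ u.1 ≤ v.1 + 1 := by
  rw [Prod.ext_iff, z2Adj]
  rcases abs_cases (u.1 - v.1) with h1 | h1 <;> rcases abs_cases (u.2 - v.2) with h2 | h2 <;>
    omega

theorem z2Adj_comm {u v : ℤ × ℤ} : z2Adj u v ↔ z2Adj v u := by
  rw [z2Adj, z2Adj, abs_sub_comm u.1, abs_sub_comm u.2]

theorem gridAdj_comm {n m : ℕ} {u v : Fin n × Fin m} : gridAdj u v ↔ gridAdj v u := by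
  rw [gridAdj, gridAdj, abs_sub_comm (u.1 : ℤ), abs_sub_comm (u.2 : ℤ)]

section Grid

variable {n m : ℕ}

open Finset

/-- Cell `ij` of the grid is the point `ij + (1, 1)` of the window `[1, n] × [1, m]` read by
`NM`. -/
def toZ2 (ij : Fin n × Fin m) : ℤ × ℤ :=
  ((ij.1 : ℤ) + 1, (ij.2 : ℤ) + 1)

theorem toZ2_injective : (toZ2 : Fin n × Fin m → ℤ × ℤ).Injective := by
  intro u v h
  simp only [toZ2, Prod.ext_iff, add_left_inj, Nat.cast_inj, Fin.val_inj] at h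
  exact Prod.ext h.1 h.2

theorem z2Adj_toZ2 (u v : Fin n × Fin m) : z2Adj (toZ2 u) (toZ2 v) ↔ gridAdj u v := by
  simp only [z2Adj, gridAdj, toZ2, add_sub_add_right_eq_sub]

theorem mem_range_toZ2 {u : ℤ × ℤ} :
    u ∈ Set.range (toZ2 (n := n) (m := m)) ↔ 1 ≤ u.1 ∧ u.1 ≤ n ∧ 1 ≤ u.2 ∧ u.2 ≤ m := by
  constructor
  · rintro ⟨ij, rfl⟩
    simp only [toZ2]
    omega
  · intro h
    refine ⟨(⟨(u.1 - 1).toNat, by omega⟩, ⟨(u.2 - 1).toNat, by omega⟩), ?_⟩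
    simp only [toZ2, Prod.ext_iff]
    omega

def gridInterior (k : ℕ) : Set (Fin n × Fin m) :=
  {ij | k ≤ (ij.1 : ℕ) ∧ (ij.1 : ℕ) + k < n ∧ k ≤ (ij.2 : ℕ) ∧ (ij.2 : ℕ) + k < m}

theorem gridInterior_anti {k l : ℕ} (hkl : k ≤ l) :
    (gridInterior l : Set (Fin n × Fin m)) ⊆ gridInterior k := by
  intro ij h
  simp only [gridInterior, Set.mem_ofPred_eq] at h ⊢
  omega

theorem mem_gridInterior_of_eq_or_gridAdj {k : ℕ} {t w : Fin n × Fin m}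
    (hw : w ∈ gridInterior (k + 1)) (h : t = w ∨ gridAdj t w) : t ∈ gridInterior k := by
  rw [← toZ2_injective.eq_iff, ← z2Adj_toZ2, eq_or_z2Adj_iff] at h
  simp only [gridInterior, Set.mem_ofPred_eq, toZ2] at hw h ⊢
  omega

theorem mem_range_toZ2_of_eq_or_z2Adj {v : Fin n × Fin m} {u : ℤ × ℤ}
    (hv : v ∈ gridInterior 1) (h : u = toZ2 v ∨ z2Adj u (toZ2 v)) :
    u ∈ Set.range (toZ2 (n := n) (m := m)) := by
  rw [eq_or_z2Adj_iff] at h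
  rw [mem_range_toZ2]
  simp only [gridInterior, Set.mem_ofPred_eq, toZ2] at hv h
  omega

theorem card_near_ends_le (n k : ℕ) :
    #{i : Fin n | ¬(k ≤ (i : ℕ) ∧ (i : ℕ) + k < n)} ≤ 2 * k := by
  calc _ ≤ #(range k ∪ Ico (n - k) n) :=
        card_le_card_of_injOn Fin.val (fun i hi => by simp at hi ⊢; omega)
          Fin.val_injective.injOn
    _ ≤ #(range k) + #(Ico (n - k) n) := card_union_le _ _
    _ ≤ 2 * k := by simp only [card_range, Nat.card_Ico]; omega

theorem card_compl_gridInterior_le (k : ℕ) :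
    Nat.card ↥(gridInterior k : Set (Fin n × Fin m))ᶜ ≤ 2 * k * (n + m) := by
  classical
  set R := ({i : Fin n | ¬(k ≤ (i : ℕ) ∧ (i : ℕ) + k < n)} : Finset (Fin n))
  set C := ({j : Fin m | ¬(k ≤ (j : ℕ) ∧ (j : ℕ) + k < m)} : Finset (Fin m))
  calc Nat.card ↥(gridInterior k : Set (Fin n × Fin m))ᶜ
      ≤ (↑(R ×ˢ univ ∪ univ ×ˢ C) : Set (Fin n × Fin m)).ncard := by
        rw [Nat.card_coe_set_eq]
        refine Set.ncard_le_ncard (fun ij hij => ?_) (Finset.finite_toSet _)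
        simp only [Set.mem_compl_iff, gridInterior, Set.mem_ofPred_eq] at hij
        simp only [R, C, coe_union, coe_product, coe_filter, coe_univ, Set.mem_union,
          Set.mem_prod, Set.mem_ofPred_eq, Set.mem_univ, mem_univ, and_true, true_and]
        omega
    _ = #(R ×ˢ univ ∪ univ ×ˢ C) := Set.ncard_coe_finset _
    _ ≤ #R * m + n * #C := by
        refine (card_union_le _ _).trans ?_
        simp only [card_product, card_univ, Fintype.card_fin, le_refl]
    _ ≤ 2 * k * m + n * (2 * k) := by
        gcongr
        exacts [card_near_ends_le n k, card_near_ends_le m k]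
    _ = 2 * k * (n + m) := by ring

end Grid

section Extension

variable {n m : ℕ}

/-- The lines `c = N + 2 + 3k` and `c = -1 - 3k` (`k ≥ 0`) of one axis: every `c ∉ [1, N]` is
within distance one of one of them, none comes within distance one of `[1, N]`, and any two are
three apart. -/
def IsOuterLine (N : ℕ) (c : ℤ) : Prop :=
  (N + 2 ≤ c ∧ 3 ∣ c - N - 2) ∨ (c ≤ -1 ∧ 3 ∣ c + 1)

theorem exists_isOuterLine_near {N : ℕ} {c : ℤ} (hc : c < 1 ∨ N < c) :
    ∃ c', IsOuterLine N c' ∧ c - 1 ≤ c' ∧ c' ≤ c + 1 := by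
  rcases hc with hc | hc
  · exact ⟨c - 1 + (-c) % 3, Or.inr ⟨by omega, by omega⟩, by omega, by omega⟩
  · exact ⟨c + 1 - (c - N - 1) % 3, Or.inl ⟨by omega, by omega⟩, by omega, by omega⟩

def padding (n m : ℕ) : Set (ℤ × ℤ) :=
  {v | IsOuterLine n v.1} ∪ {v | 1 ≤ v.1 ∧ v.1 ≤ n ∧ IsOuterLine m v.2}

def extendToZ2 (S : Set (Fin n × Fin m)) : Set (ℤ × ℤ) :=
  toZ2 '' S ∪ padding n m

theorem exists_mem_padding_eq_or_z2Adj {v : ℤ × ℤ}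
    (hv : v ∉ Set.range (toZ2 (n := n) (m := m))) :
    ∃ u ∈ padding n m, u = v ∨ z2Adj u v := by
  obtain ⟨a, b⟩ := v
  simp only [mem_range_toZ2, not_and_or, not_le] at hv
  by_cases ha : 1 ≤ a ∧ a ≤ n
  · obtain ⟨d, hd, hbd⟩ := exists_isOuterLine_near (N := m) (c := b) (by omega)
    exact ⟨(a, d), Or.inr ⟨ha.1, ha.2, hd⟩, eq_or_z2Adj_iff.2 (Or.inl ⟨rfl, hbd⟩)⟩
  · obtain ⟨c, hc, hac⟩ := exists_isOuterLine_near (N := n) (c := a) (by omega)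
    exact ⟨(c, b), Or.inl hc, eq_or_z2Adj_iff.2 (Or.inr ⟨rfl, hac⟩)⟩

theorem not_eq_or_z2Adj_of_mem_padding {u v : ℤ × ℤ} (hu : u ∈ padding n m)
    (hv : v ∈ Set.range (toZ2 (n := n) (m := m))) : ¬(u = v ∨ z2Adj u v) := by
  rw [mem_range_toZ2] at hv
  rw [eq_or_z2Adj_iff]
  simp only [padding, IsOuterLine, Set.mem_union, Set.mem_ofPred_eq] at hu
  omega

/-- The private neighbour is the neighbour on the side away from the window. -/
theorem exists_isPrivateNeighbor_of_mem_padding {u : ℤ × ℤ} (hu : u ∈ padding n m) :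
    ∃ w, IsPrivateNeighbor z2Adj (Set.range (toZ2 (n := n) (m := m)) ∪ padding n m) u w := by
  obtain ⟨a, b⟩ := u
  simp only [padding, IsOuterLine, Set.mem_union, Set.mem_ofPred_eq] at hu
  rcases hu with (h | h) | ⟨h1, h2, h | h⟩ <;>
    [refine ⟨(a + 1, b), ?_⟩; refine ⟨(a - 1, b), ?_⟩; refine ⟨(a, b + 1), ?_⟩;
      refine ⟨(a, b - 1), ?_⟩] <;>
  · refine ⟨eq_or_z2Adj_iff.2 (by omega), ?_⟩
    rintro ⟨e, f⟩ ht htw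
    rw [eq_or_z2Adj_iff] at htw
    simp only [mem_range_toZ2, padding, IsOuterLine, Set.mem_union, Set.mem_ofPred_eq] at ht htw
    simp only [Prod.ext_iff]
    omega

theorem minDomZ2_extendToZ2 {S : Set (Fin n × Fin m)} (hS : MinDomGrid S) :
    MinDomZ2 (extendToZ2 S) := by
  rw [minDomGrid_iff] at hS
  rw [minDomZ2_iff]
  refine IsDominating.isMinimalDominating (isDominating_iff.2 fun v => ?_) ?_
  · by_cases hv : v ∈ Set.range (toZ2 (n := n) (m := m))
    · obtain ⟨g, rfl⟩ := hv
      obtain ⟨u, hu, hug⟩ := isDominating_iff.1 hS.1 g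
      refine ⟨toZ2 u, Or.inl (Set.mem_image_of_mem _ hu), ?_⟩
      rwa [toZ2_injective.eq_iff, z2Adj_toZ2]
    · obtain ⟨u, hu, huv⟩ := exists_mem_padding_eq_or_z2Adj hv
      exact ⟨u, Or.inr hu, huv⟩
  · rintro _ (⟨s, hs, rfl⟩ | hu)
    · obtain ⟨w, hw⟩ := hS.exists_isPrivateNeighbor hs
      exact ⟨toZ2 w, (hw.image toZ2_injective z2Adj_toZ2).union fun u hu =>
        not_eq_or_z2Adj_of_mem_padding hu (Set.mem_range_self w)⟩
    · obtain ⟨w, hw⟩ := exists_isPrivateNeighbor_of_mem_padding hu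
      exact ⟨w, hw.mono (Set.union_subset_union_left _ (Set.image_subset_range _ _))⟩

theorem toZ2_mem_extendToZ2 {S : Set (Fin n × Fin m)} {ij : Fin n × Fin m} :
    toZ2 ij ∈ extendToZ2 S ↔ ij ∈ S := by
  rw [extendToZ2, Set.mem_union, toZ2_injective.mem_set_image, or_iff_left_iff_imp]
  exact fun h => absurd (Or.inl rfl) (not_eq_or_z2Adj_of_mem_padding h (Set.mem_range_self ij))

theorem Mnum_le_NM (n m : ℕ) : Mnum n m ≤ NM n m := by
  classical
  have hX (S : {S : Set (Fin n × Fin m) // MinDomGrid S}) :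
      (fun v => decide (v ∈ extendToZ2 S.1)) ∈ XM := by
    simpa only [XM, Set.mem_ofPred_eq, decide_eq_true_eq, Set.ofPred_mem_eq] using
      minDomZ2_extendToZ2 S.2
  refine Nat.card_le_card_of_injective
    (fun S => ⟨fun ij => decide (toZ2 ij ∈ extendToZ2 S.1), _, hX S, fun _ => rfl⟩)
    fun S T h => Subtype.ext (Set.ext fun ij => ?_)
  simpa only [decide_eq_decide, toZ2_mem_extendToZ2] using congrFun (congrArg Subtype.val h) ij

end Extension

section Restriction

variable {n m : ℕ}

theorem exists_minDomGrid_eq_on_gridInterior {x : ℤ × ℤ → Bool} (hx : x ∈ XM) :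
    ∃ D : Set (Fin n × Fin m), MinDomGrid D ∧
      ∀ ij ∈ gridInterior 3, ij ∈ D ↔ x (toZ2 ij) = true := by
  set X := {u | x u = true}
  have hX : IsMinimalDominating z2Adj X := minDomZ2_iff.1 hx
  set A : Set (Fin n × Fin m) := toZ2 ⁻¹' X ∪ (gridInterior 1)ᶜ
  have hA : IsDominating gridAdj A := isDominating_iff.2 fun v => by
    by_cases hv : v ∈ gridInterior 1
    · obtain ⟨u, hu, huv⟩ := isDominating_iff.1 hX.1 (toZ2 v)
      obtain ⟨t, rfl⟩ := mem_range_toZ2_of_eq_or_z2Adj hv huv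
      exact ⟨t, Or.inl hu, by rwa [toZ2_injective.eq_iff, z2Adj_toZ2] at huv⟩
    · exact ⟨v, Or.inr hv, Or.inl rfl⟩
  have hK : ∀ s ∈ toZ2 ⁻¹' X ∩ gridInterior 3, ∃ w, IsPrivateNeighbor gridAdj A s w := by
    rintro s ⟨hsX, hs⟩
    obtain ⟨w', hw'⟩ := hX.exists_isPrivateNeighbor hsX
    obtain ⟨w, rfl⟩ := mem_range_toZ2_of_eq_or_z2Adj (gridInterior_anti (by norm_num) hs)
      (hw'.1.imp Eq.symm z2Adj_comm.1)
    have hsw : s = w ∨ gridAdj s w := by rw [← toZ2_injective.eq_iff, ← z2Adj_toZ2]; exact hw'.1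
    have hw : w ∈ gridInterior 2 :=
      mem_gridInterior_of_eq_or_gridAdj hs (hsw.imp Eq.symm gridAdj_comm.1)
    exact ⟨w, (hw'.preimage toZ2_injective z2Adj_toZ2).union fun t ht htw =>
      ht (mem_gridInterior_of_eq_or_gridAdj hw htw)⟩
  obtain ⟨D, hD, hKD, hDA⟩ := exists_isMinimalDominating_between hA
    (Set.inter_subset_left.trans Set.subset_union_left) hK
  refine ⟨D, hD, fun ij hij => ⟨fun h => ?_, fun h => hKD ⟨h, hij⟩⟩⟩
  exact (hDA h).resolve_right fun h => h (gridInterior_anti (by norm_num) hij)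

theorem NM_le_pow_mul_Mnum (n m : ℕ) : NM n m ≤ 2 ^ (6 * (n + m)) * Mnum n m := by
  have hrestrict : ∀ p : {p : Fin n × Fin m → Bool // ∃ x ∈ XM, ∀ ij, p ij = x (toZ2 ij)},
      ∃ D, MinDomGrid D ∧ ∀ ij ∈ gridInterior 3, ij ∈ D ↔ p.1 ij = true := by
    rintro ⟨p, x, hx, hpx⟩
    obtain ⟨D, hD, hDx⟩ := exists_minDomGrid_eq_on_gridInterior hx
    exact ⟨D, hD, fun ij hij => (hDx ij hij).trans (by rw [← hpx ij])⟩
  choose D hD hDp using hrestrict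
  let frame : Set (Fin n × Fin m) := (gridInterior 3)ᶜ
  have hinj :
      (fun p => ((fun ij : frame => p.1 ij), (⟨D p, hD p⟩ : {S // MinDomGrid S}))).Injective := by
    intro p q hpq
    simp only [Prod.mk.injEq, Subtype.mk.injEq] at hpq
    refine Subtype.ext (funext fun ij => ?_)
    by_cases hij : ij ∈ gridInterior 3
    · rw [Bool.eq_iff_iff, ← hDp p ij hij, ← hDp q ij hij, hpq.2]
    · exact congrFun hpq.1 ⟨ij, hij⟩
  calc NM n m ≤ Nat.card ((frame → Bool) × {S : Set (Fin n × Fin m) // MinDomGrid S}) :=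
        Nat.card_le_card_of_injective _ hinj
    _ = 2 ^ Nat.card frame * Mnum n m := by
        rw [Nat.card_prod, Nat.card_fun, Nat.card_eq_fintype_card (α := Bool), Fintype.card_bool,
          Mnum]
    _ ≤ 2 ^ (6 * (n + m)) * Mnum n m := by
        gcongr
        · norm_num
        · exact card_compl_gridInterior_le 3

end Restriction

theorem minimal_domination_count_bounds_general (n m : ℕ) :
    NM n m ≤ 2 ^ (6 * (n + m)) * Mnum n m ∧ Mnum n m ≤ NM n m :=
  ⟨NM_le_pow_mul_Mnum n m, Mnum_le_NM n m⟩

/-- For all `n, m ≥ 1`,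
`N_{n,m}(X^M) / 2^{6(n+m)} ≤ M_{n,m} ≤ N_{n,m}(X^M)`. -/
theorem minimal_domination_count_bounds (n m : ℕ) (hn : 1 ≤ n) (hm : 1 ≤ m) :
    NM n m ≤ 2 ^ (6 * (n + m)) * Mnum n m ∧ Mnum n m ≤ NM n m :=
  minimal_domination_count_bounds_general n m
end

section
/- The (σ, ρ)-domination subshift on Z² with σ = {3} and ρ = {1} is not block gluing: there exist two globally-admissible half-plane patterns that cannot be glued with any gap of size 4k (for every k ≥ 0), hence with no constant gap. -/
/-- The number of grid-neighbours of `v` that belong to `S`. -/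
noncomputable def nbrCount (S : Set (ℤ × ℤ)) (v : ℤ × ℤ) : ℕ :=
  Nat.card {u : ℤ × ℤ // z2Adj u v ∧ u ∈ S}

/-- The `({3},{1})`-domination subshift: configurations whose set of selected
positions `S` satisfies: every position in `S` has exactly 3 neighbours in `S`,
and every position not in `S` has exactly 1 neighbour in `S`. -/
def X31 : Set (ℤ × ℤ → Bool) :=
  {x | ∀ v : ℤ × ℤ,
    (x v = true → nbrCount {u | x u = true} v = 3) ∧
    (x v = false → nbrCount {u | x u = true} v = 1)}

/-- `X` is `c`-block-gluing. -/
def BlockGluing {A : Type*} (X : Set (ℤ × ℤ → A)) (c : ℕ) : Prop :=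
  ∀ (n : ℕ) (p q : Fin n × Fin n → A),
    (∃ x ∈ X, ∀ ij : Fin n × Fin n, x (((ij.1 : ℤ) + 1), ((ij.2 : ℤ) + 1)) = p ij) →
    (∃ x ∈ X, ∀ ij : Fin n × Fin n, x (((ij.1 : ℤ) + 1), ((ij.2 : ℤ) + 1)) = q ij) →
    ∀ u v : ℤ × ℤ,
      (∀ ij kl : Fin n × Fin n,
        (c : ℤ) ≤ max |(u.1 + (ij.1 : ℤ) + 1) - (v.1 + (kl.1 : ℤ) + 1)|
                      |(u.2 + (ij.2 : ℤ) + 1) - (v.2 + (kl.2 : ℤ) + 1)|) →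
      ∃ x ∈ X,
        (∀ ij : Fin n × Fin n, x ((u.1 + (ij.1 : ℤ) + 1), (u.2 + (ij.2 : ℤ) + 1)) = p ij) ∧
        (∀ ij : Fin n × Fin n, x ((v.1 + (ij.1 : ℤ) + 1), (v.2 + (ij.2 : ℤ) + 1)) = q ij)

lemma adj_iff (u : ℤ × ℤ) (a b : ℤ) :
    z2Adj u (a, b) ↔ (u = (a+1, b) ∨ u = (a-1, b) ∨ u = (a, b+1) ∨ u = (a, b-1)) := by
  unfold z2Adj
  simp only [Prod.ext_iff]
  rcases abs_cases (u.1 - a) with ⟨h1, _⟩ | ⟨h1, _⟩ <;>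
    rcases abs_cases (u.2 - b) with ⟨h2, _⟩ | ⟨h2, _⟩ <;>
    rw [h1, h2] <;> omega

lemma count_eq (x : ℤ × ℤ → Bool) (a b : ℤ) :
    nbrCount {u | x u = true} (a, b) =
      (if x (a+1, b) = true then 1 else 0) + (if x (a-1, b) = true then 1 else 0) +
      (if x (a, b+1) = true then 1 else 0) + (if x (a, b-1) = true then 1 else 0) := by
  have hset : {u : ℤ × ℤ | z2Adj u (a, b) ∧ x u = true} =
      ↑((({(a+1, b), (a-1, b), (a, b+1), (a, b-1)} : Finset (ℤ × ℤ))).filter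
        (fun u => x u = true)) := by
    ext u
    simp only [Set.mem_setOf_eq, Finset.coe_filter, Finset.mem_insert, Finset.mem_singleton,
      adj_iff]
  have h0 : nbrCount {u | x u = true} (a, b) =
      ({u : ℤ × ℤ | z2Adj u (a, b) ∧ x u = true} : Set (ℤ × ℤ)).ncard :=
    Nat.card_coe_set_eq _
  rw [h0, hset, Set.ncard_coe_finset, Finset.card_filter]
  rw [Finset.sum_insert (by simp only [Finset.mem_insert, Finset.mem_singleton, Prod.mk.injEq]; omega),
      Finset.sum_insert (by simp only [Finset.mem_insert, Finset.mem_singleton, Prod.mk.injEq]; omega),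
      Finset.sum_insert (by simp only [Finset.mem_insert, Finset.mem_singleton, Prod.mk.injEq]; omega),
      Finset.sum_singleton]
  ring

lemma forceU (x : ℤ × ℤ → Bool) (hx : x ∈ X31) (a b : ℤ) (c1 c2 c4 cc r : Bool)
    (h1 : x (a+1, b) = c1) (h2 : x (a-1, b) = c2) (h4 : x (a, b-1) = c4) (hc : x (a, b) = cc)
    (hr : (cond cc 3 1 : ℕ) = cond r 1 0 + cond c1 1 0 + cond c2 1 0 + cond c4 1 0) :
    x (a, b+1) = r := by
  have hcount : nbrCount {u | x u = true} (a, b) = cond cc 3 1 := by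
    cases cc
    · exact (hx (a, b)).2 hc
    · exact (hx (a, b)).1 hc
  rw [count_eq, h1, h2, h4] at hcount
  cases hu : x (a, b+1) <;> rw [hu] at hcount <;>
    cases r <;> cases c1 <;> cases c2 <;> cases c4 <;> cases cc <;> simp_all

lemma forceR (x : ℤ × ℤ → Bool) (hx : x ∈ X31) (a b : ℤ) (c2 c3 c4 cc r : Bool)
    (h2 : x (a-1, b) = c2) (h3 : x (a, b+1) = c3) (h4 : x (a, b-1) = c4) (hc : x (a, b) = cc)
    (hr : (cond cc 3 1 : ℕ) = cond r 1 0 + cond c2 1 0 + cond c3 1 0 + cond c4 1 0) :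
    x (a+1, b) = r := by
  have hcount : nbrCount {u | x u = true} (a, b) = cond cc 3 1 := by
    cases cc
    · exact (hx (a, b)).2 hc
    · exact (hx (a, b)).1 hc
  rw [count_eq, h2, h3, h4] at hcount
  cases hu : x (a+1, b) <;> rw [hu] at hcount <;>
    cases r <;> cases c2 <;> cases c3 <;> cases c4 <;> cases cc <;> simp_all

def x0f : ℤ × ℤ → Bool := fun u => decide (u.1 % 4 = 0 ∨ u.1 % 4 = 1)
def x1f : ℤ × ℤ → Bool := fun u => decide (u.1 % 4 = 1 ∨ u.1 % 4 = 2)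

lemma x0f_true (a b : ℤ) (h : a % 4 = 0 ∨ a % 4 = 1) : x0f (a, b) = true := by
  simp only [x0f, decide_eq_true_eq]; omega

lemma x0f_false (a b : ℤ) (h : a % 4 = 2 ∨ a % 4 = 3) : x0f (a, b) = false := by
  simp only [x0f, decide_eq_false_iff_not]; omega

lemma x1f_true (a b : ℤ) (h : a % 4 = 1 ∨ a % 4 = 2) : x1f (a, b) = true := by
  simp only [x1f, decide_eq_true_eq]; omega

lemma x1f_false (a b : ℤ) (h : a % 4 = 0 ∨ a % 4 = 3) : x1f (a, b) = false := by
  simp only [x1f, decide_eq_false_iff_not]; omega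

lemma x0_mem : x0f ∈ X31 := by
  intro v
  obtain ⟨a, b⟩ := v
  constructor <;> intro h <;> rw [count_eq] <;>
    simp only [x0f, decide_eq_true_eq, decide_eq_false_iff_not] at h ⊢ <;>
    split_ifs <;> omega

lemma x1_mem : x1f ∈ X31 := by
  intro v
  obtain ⟨a, b⟩ := v
  constructor <;> intro h <;> rw [count_eq] <;>
    simp only [x1f, decide_eq_true_eq, decide_eq_false_iff_not] at h ⊢ <;>
    split_ifs <;> omega

lemma col_step (x : ℤ × ℤ → Bool) (hx : x ∈ X31) (c : ℤ)
    (h1 : ∀ j, x (c, j) = true) (h0 : ∀ j, x (c-1, j) = false) :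
    (∀ j, x (c+1, j) = true) ∧ (∀ j, x (c+2, j) = false) ∧
    (∀ j, x (c+3, j) = false) ∧ (∀ j, x (c+4, j) = true) := by
  have A : ∀ j, x (c+1, j) = true := fun j =>
    forceR x hx c j false true true true true (h0 j) (h1 (j+1)) (h1 (j-1)) (h1 j) (by decide)
  have A' : ∀ j, x (c+1-1, j) = true := by
    intro j; rw [show c+1-1 = c by ring]; exact h1 j
  have B : ∀ j, x (c+1+1, j) = false := fun j =>
    forceR x hx (c+1) j true true true true false (A' j) (A (j+1)) (A (j-1)) (A j) (by decide)
  have B' : ∀ j, x (c+2, j) = false := by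
    intro j; rw [show (c+2 : ℤ) = c+1+1 by ring]; exact B j
  have A'' : ∀ j, x (c+2-1, j) = true := by
    intro j; rw [show c+2-1 = c+1 by ring]; exact A j
  have C : ∀ j, x (c+2+1, j) = false := fun j =>
    forceR x hx (c+2) j true false false false false (A'' j) (B' (j+1)) (B' (j-1)) (B' j)
      (by decide)
  have C' : ∀ j, x (c+3, j) = false := by
    intro j; rw [show (c+3 : ℤ) = c+2+1 by ring]; exact C j
  have B'' : ∀ j, x (c+3-1, j) = false := by
    intro j; rw [show c+3-1 = c+2 by ring]; exact B' j
  have D : ∀ j, x (c+3+1, j) = true := fun j =>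
    forceR x hx (c+3) j false false false false true (B'' j) (C' (j+1)) (C' (j-1)) (C' j)
      (by decide)
  have D' : ∀ j, x (c+4, j) = true := by
    intro j; rw [show (c+4 : ℤ) = c+3+1 by ring]; exact D j
  exact ⟨A, B', C', D'⟩

lemma up_step (x : ℤ × ℤ → Bool) (hx : x ∈ X31) (i r : ℤ)
    (hl : x (i-1, r) = x0f (i-1, 0)) (hctr : x (i, r) = x0f (i, 0))
    (hrr : x (i+1, r) = x0f (i+1, 0)) (hd : x (i, r-1) = x0f (i, 0)) :
    x (i, r+1) = x0f (i, 0) := by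
  have h4 : i % 4 = 0 ∨ i % 4 = 1 ∨ i % 4 = 2 ∨ i % 4 = 3 := by omega
  rcases h4 with h | h | h | h
  · rw [x0f_false _ _ (by omega)] at hl
    rw [x0f_true _ _ (by omega)] at hctr hd
    rw [x0f_true _ _ (by omega)] at hrr
    rw [x0f_true _ _ (by omega)]
    exact forceU x hx i r true false true true true hrr hl hd hctr (by decide)
  · rw [x0f_true _ _ (by omega)] at hl
    rw [x0f_true _ _ (by omega)] at hctr hd
    rw [x0f_false _ _ (by omega)] at hrr
    rw [x0f_true _ _ (by omega)]
    exact forceU x hx i r false true true true true hrr hl hd hctr (by decide)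
  · rw [x0f_true _ _ (by omega)] at hl
    rw [x0f_false _ _ (by omega)] at hctr hd
    rw [x0f_false _ _ (by omega)] at hrr
    rw [x0f_false _ _ (by omega)]
    exact forceU x hx i r false true false false false hrr hl hd hctr (by decide)
  · rw [x0f_false _ _ (by omega)] at hl
    rw [x0f_false _ _ (by omega)] at hctr hd
    rw [x0f_true _ _ (by omega)] at hrr
    rw [x0f_false _ _ (by omega)]
    exact forceU x hx i r true false false false false hrr hl hd hctr (by decide)

lemma part1 (k : ℕ) : ¬ ∃ x ∈ X31,
    (∀ u : ℤ × ℤ, u.1 ≤ 0 → x u = x0f u) ∧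
    (∀ u : ℤ × ℤ, 0 < u.1 → x (u + ((4 * k : ℤ), 0)) = x1f u) := by
  rintro ⟨x, hx, hp, hq⟩
  have hcol0 : ∀ j, x (0, j) = true := fun j => by
    rw [hp (0, j) (by norm_num), x0f_true _ _ (by omega)]
  have hcolm1 : ∀ j, x (-1, j) = false := fun j => by
    rw [hp (-1, j) (by norm_num), x0f_false _ _ (by omega)]
  have key : ∀ m : ℕ, (∀ j, x (4 * (m : ℤ), j) = true) ∧ (∀ j, x (4 * (m : ℤ) - 1, j) = false) := by
    intro m
    induction m with
    | zero =>
      constructor <;> intro j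
      · rw [show (4 * ((0 : ℕ) : ℤ)) = 0 by norm_num]; exact hcol0 j
      · rw [show (4 * ((0 : ℕ) : ℤ) - 1) = -1 by norm_num]; exact hcolm1 j
    | succ m ih =>
      obtain ⟨c1, c2, c3, c4⟩ := col_step x hx (4 * (m : ℤ)) ih.1 ih.2
      constructor <;> intro j
      · rw [show (4 * ((m + 1 : ℕ) : ℤ)) = 4 * (m : ℤ) + 4 by push_cast; ring]; exact c4 j
      · rw [show (4 * ((m + 1 : ℕ) : ℤ) - 1) = 4 * (m : ℤ) + 3 by push_cast; ring]; exact c3 j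
  obtain ⟨ck1, ck2⟩ := key k
  obtain ⟨-, c2f, -, -⟩ := col_step x hx (4 * (k : ℤ)) ck1 ck2
  have hfalse : x (4 * (k : ℤ) + 2, 0) = false := c2f 0
  have htrue := hq (2, 0) (by norm_num)
  rw [show ((2, 0) : ℤ × ℤ) + ((4 * k : ℤ), 0) = (4 * (k : ℤ) + 2, 0) by
      simp [Prod.ext_iff]; ring] at htrue
  rw [x1f_true _ _ (by omega)] at htrue
  rw [hfalse] at htrue
  exact Bool.noConfusion htrue

lemma part2 : ¬ ∃ c : ℕ, BlockGluing X31 c := by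
  rintro ⟨c, hc⟩
  set n : ℕ := 2 * c + 8 with hn
  have hnz : ((n : ℕ) : ℤ) = 2 * (c : ℤ) + 8 := by push_cast [hn]; ring
  obtain ⟨x, hx, hpx, hqx⟩ :=
    hc n (fun ij => x0f ((ij.1 : ℤ) + 1, (ij.2 : ℤ) + 1))
      (fun ij => x1f ((ij.1 : ℤ) + 1, (ij.2 : ℤ) + 1))
      ⟨x0f, x0_mem, fun ij => rfl⟩ ⟨x1f, x1_mem, fun ij => rfl⟩
      ((0 : ℤ), (0 : ℤ)) ((0 : ℤ), (c : ℤ) + (n : ℤ))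
      (by
        intro ij kl
        have h1 : (0 : ℤ) ≤ (ij.2 : ℤ) := Int.natCast_nonneg _
        have h2 : ((kl.2 : ℤ)) < (n : ℤ) := by exact_mod_cast kl.2.isLt
        have h3 : (0 : ℤ) ≤ (kl.2 : ℤ) := Int.natCast_nonneg _
        have h4 : ((ij.2 : ℤ)) < (n : ℤ) := by exact_mod_cast ij.2.isLt
        refine le_max_of_le_right ?_
        rcases abs_cases (((0 : ℤ), (0 : ℤ)).2 + (ij.2 : ℤ) + 1 -
            ((((0 : ℤ), (c : ℤ) + (n : ℤ))).2 + (kl.2 : ℤ) + 1)) with ⟨h, _⟩ | ⟨h, _⟩ <;>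
          rw [h] <;> dsimp only <;> omega)
  -- the square facts
  have hsq : ∀ i j : ℤ, 1 ≤ i → i ≤ (n : ℤ) → 1 ≤ j → j ≤ (n : ℤ) → x (i, j) = x0f (i, 0) := by
    intro i j hi1 hi2 hj1 hj2
    have := hpx (⟨(i-1).toNat, by omega⟩, ⟨(j-1).toNat, by omega⟩)
    have h2 : x ((0 : ℤ) + (((i-1).toNat : ℕ) : ℤ) + 1, (0 : ℤ) + (((j-1).toNat : ℕ) : ℤ) + 1)
        = x0f ((((i-1).toNat : ℕ) : ℤ) + 1, (((j-1).toNat : ℕ) : ℤ) + 1) := this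
    rw [Int.toNat_of_nonneg (by omega : (0:ℤ) ≤ i - 1),
        Int.toNat_of_nonneg (by omega : (0:ℤ) ≤ j - 1)] at h2
    rw [show (0 : ℤ) + (i - 1) + 1 = i by ring, show (0 : ℤ) + (j - 1) + 1 = j by ring] at h2
    refine h2.trans ?_
    show x0f (i - 1 + 1, j - 1 + 1) = x0f (i, 0)
    rw [show i - 1 + 1 = i by ring]; rfl
  have hsq2 : ∀ i j : ℤ, 1 ≤ i → i ≤ (n : ℤ) → 1 ≤ j → j ≤ (n : ℤ) →
      x (i, (c : ℤ) + (n : ℤ) + j) = x1f (i, 0) := by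
    intro i j hi1 hi2 hj1 hj2
    have := hqx (⟨(i-1).toNat, by omega⟩, ⟨(j-1).toNat, by omega⟩)
    have h2 : x ((0 : ℤ) + (((i-1).toNat : ℕ) : ℤ) + 1,
        ((c : ℤ) + (n : ℤ)) + (((j-1).toNat : ℕ) : ℤ) + 1)
        = x1f ((((i-1).toNat : ℕ) : ℤ) + 1, (((j-1).toNat : ℕ) : ℤ) + 1) := this
    rw [Int.toNat_of_nonneg (by omega : (0:ℤ) ≤ i - 1),
        Int.toNat_of_nonneg (by omega : (0:ℤ) ≤ j - 1)] at h2
    rw [show (0 : ℤ) + (i - 1) + 1 = i by ring,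
        show ((c : ℤ) + (n : ℤ)) + (j - 1) + 1 = (c : ℤ) + (n : ℤ) + j by ring] at h2
    refine h2.trans ?_
    show x1f (i - 1 + 1, j - 1 + 1) = x1f (i, 0)
    rw [show i - 1 + 1 = i by ring]; rfl
  -- vertical propagation
  have key : ∀ t : ℕ, ∀ i : ℤ, 1 + (t : ℤ) ≤ i → i ≤ (n : ℤ) - (t : ℤ) →
      x (i, (n : ℤ) + (t : ℤ)) = x0f (i, 0) ∧ x (i, (n : ℤ) + (t : ℤ) - 1) = x0f (i, 0) := by
    intro t
    induction t with
    | zero =>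
      intro i hi1 hi2
      constructor
      · rw [show ((n : ℤ) + ((0 : ℕ) : ℤ)) = (n : ℤ) by norm_num]
        exact hsq i (n : ℤ) (by omega) (by omega) (by omega) (by omega)
      · rw [show ((n : ℤ) + ((0 : ℕ) : ℤ) - 1) = (n : ℤ) - 1 by norm_num]
        exact hsq i ((n : ℤ) - 1) (by omega) (by omega) (by omega) (by omega)
    | succ t ih =>
      intro i hi1 hi2
      have ht1 : ((t + 1 : ℕ) : ℤ) = (t : ℤ) + 1 := by push_cast; ring
      rw [ht1] at hi1 hi2 ⊢
      constructor
      · rw [show ((n : ℤ) + ((t : ℤ) + 1)) = ((n : ℤ) + (t : ℤ)) + 1 by ring]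
        exact up_step x hx i ((n : ℤ) + (t : ℤ))
          ((ih (i-1) (by omega) (by omega)).1)
          ((ih i (by omega) (by omega)).1)
          ((ih (i+1) (by omega) (by omega)).1)
          ((ih i (by omega) (by omega)).2)
      · rw [show ((n : ℤ) + ((t : ℤ) + 1) - 1) = ((n : ℤ) + (t : ℤ)) by ring]
        exact (ih i (by omega) (by omega)).1
  -- pick a column i0 ≡ 2 (mod 4) in the forced window
  set i0 : ℤ := 4 * (((c : ℤ) + 3) / 4) + 2 with hi0
  have hi0m : i0 % 4 = 2 := by omega
  have hi0b : (c : ℤ) + 2 ≤ i0 ∧ i0 ≤ (c : ℤ) + 7 := by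
    constructor <;> omega
  have hkey := key (c + 1) i0 (by push_cast; omega) (by push_cast; omega)
  have hfalse : x (i0, (n : ℤ) + ((c + 1 : ℕ) : ℤ)) = false := by
    rw [hkey.1, x0f_false _ _ (by omega)]
  have htrue : x (i0, (c : ℤ) + (n : ℤ) + 1) = true := by
    rw [hsq2 i0 1 (by omega) (by omega) (by norm_num) (by omega), x1f_true _ _ (by omega)]
  rw [show ((n : ℤ) + ((c + 1 : ℕ) : ℤ)) = (c : ℤ) + (n : ℤ) + 1 by push_cast; ring] at hfalse
  rw [hfalse] at htrue
  exact Bool.noConfusion htrue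

/-- The `({3},{1})`-domination subshift is not block gluing: there are two
globally-admissible half-plane patterns that cannot be glued with any gap of
size `4k`, hence `X31` is `c`-block-gluing for no constant `c`. -/
theorem X31_not_block_gluing :
    (∃ p q : ℤ × ℤ → Bool,
      (∃ x ∈ X31, ∀ u : ℤ × ℤ, u.1 ≤ 0 → x u = p u) ∧
      (∃ x ∈ X31, ∀ u : ℤ × ℤ, 0 < u.1 → x u = q u) ∧
      (∀ k : ℕ, ¬ ∃ x ∈ X31,
        (∀ u : ℤ × ℤ, u.1 ≤ 0 → x u = p u) ∧
        (∀ u : ℤ × ℤ, 0 < u.1 → x (u + ((4 * k : ℤ), 0)) = q u))) ∧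
    ¬ ∃ c : ℕ, BlockGluing X31 c := by
  refine ⟨⟨x0f, x1f, ⟨x0f, x0_mem, fun _ _ => rfl⟩, ⟨x1f, x1_mem, fun _ _ => rfl⟩, part1⟩, part2⟩
end

section
/- For meta-k-dominating tuples on a graph, minimality with respect to the simultaneous-reduction order < coincides with minimality with respect to the single-vertex-reduction order <₁: a meta-k-dominating tuple S is minimal for < if and only if it is minimal for <₁. -/
/-- A meta-`k`-dominating labelling of the vertices of `G`: each vertex gets a
label in `[0,k]`, and every vertex of label `< k` has a neighbour with a
strictly larger label. -/
def MetaDom {V : Type*} (G : SimpleGraph V) (k : ℕ) (f : V → ℕ) : Prop :=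
  (∀ v, f v ≤ k) ∧ ∀ v, f v < k → ∃ u, G.Adj v u ∧ f v < f u

/-- The simultaneous-reduction strict order on labellings. -/
def MetaLt {V : Type*} (f' f : V → ℕ) : Prop :=
  (∀ v, f' v ≤ f v) ∧ ∃ v, f' v < f v

/-- The single-vertex-reduction strict order on labellings. -/
def MetaLt1 {V : Type*} (f' f : V → ℕ) : Prop :=
  ∃ v, f' v < f v ∧ ∀ u, u ≠ v → f' u = f u

/-- Minimality of meta-`k`-dominating tuples for the simultaneous-reduction
order `<` coincides with minimality for the single-vertex-reduction order `<₁`. -/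
theorem metaDom_minimal_iff_minimal_one
    {V : Type*} (G : SimpleGraph V) (k : ℕ) (f : V → ℕ)
    (hf : MetaDom G k f) :
    (¬ ∃ f', MetaDom G k f' ∧ MetaLt f' f) ↔
      (¬ ∃ f', MetaDom G k f' ∧ MetaLt1 f' f) := by
  classical
  constructor
  · -- minimal for < implies minimal for <₁ : <₁ implies <
    intro h ⟨f', hdom, v, hv, heq⟩
    exact h ⟨f', hdom, fun u => by
      by_cases hu : u = v
      · subst hu; exact hv.le
      · exact (heq u hu).le, ⟨v, hv⟩⟩
  · -- minimal for <₁ implies minimal for <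
    intro h ⟨f', hdom, hle, v, hv⟩
    -- pick a decreased vertex x with minimal f-value
    have hex : ∃ n, ∃ x, f' x < f x ∧ f x = n := ⟨f v, v, hv, rfl⟩
    obtain ⟨x, hx, hfx⟩ := Nat.find_spec hex
    have hmin : ∀ y, f' y < f y → f x ≤ f y := by
      intro y hy
      rw [hfx]
      exact Nat.find_min' hex ⟨y, hy, rfl⟩
    set g : V → ℕ := fun u => if u = x then f' x else f u with hg
    apply h
    refine ⟨g, ⟨?_, ?_⟩, x, ?_, ?_⟩
    · intro u
      simp only [hg]
      split
      · exact (hle x).trans (hf.1 x)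
      · exact hf.1 u
    · intro u hu
      by_cases hux : u = x
      · subst hux
        simp only [hg, if_pos rfl] at hu ⊢
        obtain ⟨w, hadj, hw⟩ := hdom.2 u hu
        have hwx : w ≠ u := (G.ne_of_adj hadj).symm
        exact ⟨w, hadj, by simp only [if_neg hwx]; exact hw.trans_le (hle w)⟩
      · simp only [hg, if_neg hux] at hu ⊢
        obtain ⟨w, hadj, hw⟩ := hf.2 u hu
        by_cases hwx : w = x
        · -- w = x : then u is not decreased, use f' domination at u
          rw [hwx] at hw
          have hnu : ¬ f' u < f u := fun hc => absurd (hmin u hc) (not_le.mpr hw)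
          have heq : f' u = f u := le_antisymm (hle u) (not_lt.mp hnu)
          obtain ⟨w', hadj', hw'⟩ := hdom.2 u (heq ▸ hu)
          refine ⟨w', hadj', ?_⟩
          by_cases hwx' : w' = x
          · simp only [if_pos hwx']
            rw [hwx'] at hw'
            omega
          · simp only [if_neg hwx']
            have := hle w'
            omega
        · exact ⟨w, hadj, by simp only [if_neg hwx]; exact hw⟩
    · simp only [hg, if_pos rfl]; exact hx
    · intro u hu; simp only [hg, if_neg hu]
end

section
/- Every polyomino of size n ≥ 2 that is hole-free and corner compatible contains a unit square whose removal yields a polyomino of size n-1 that is also hole-free and corner compatible. -/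
/-- The grid graph on `ℤ²`: two cells are adjacent when they share an edge. -/
def GZ : SimpleGraph (ℤ × ℤ) where
  Adj u v := |u.1 - v.1| + |u.2 - v.2| = 1
  symm := by
    constructor
    intro u v h
    rw [abs_sub_comm u.1, abs_sub_comm u.2] at h
    exact h
  loopless := by
    constructor
    intro u h
    simp at h

/-- A polyomino: a finite, nonempty, edge-connected set of cells of `ℤ²`. -/
def IsPolyomino (P : Finset (ℤ × ℤ)) : Prop :=
  P.Nonempty ∧ (GZ.induce {z : ℤ × ℤ | z ∈ P}).Connected

/-- `P` is hole-free: every connected component of the complement of `P` is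
infinite. -/
def HoleFree (P : Finset (ℤ × ℤ)) : Prop :=
  ∀ v : ℤ × ℤ, ∀ hv : v ∉ P,
    {u : ℤ × ℤ | ∃ hu : u ∉ P,
      (GZ.induce {z : ℤ × ℤ | z ∉ P}).Reachable ⟨v, hv⟩ ⟨u, hu⟩}.Infinite

/-- `Q` is an isometric copy of `P` (rotations, reflections and translations). -/
def IsoCopy (P Q : Finset (ℤ × ℤ)) : Prop :=
  ∃ (t : ℤ × ℤ) (r : ℕ) (s : Bool),
    Q = P.image (fun p =>
      ((fun q : ℤ × ℤ => (-q.2, q.1))^[r] (if s then (p.1, -p.2) else p)) + t)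

/-- The quarter plane with corner `(0,0)`. -/
def Quarter : Set (ℤ × ℤ) := {z | 0 ≤ z.1 ∧ z.2 ≤ 0}

/-- `P` is corner compatible: some isometric copy of `P` can be placed in the
quarter plane covering the corner cell without disconnecting the empty cells. -/
def CornerCompatible (P : Finset (ℤ × ℤ)) : Prop :=
  ∃ Q : Finset (ℤ × ℤ), IsoCopy P Q ∧ (↑Q : Set (ℤ × ℤ)) ⊆ Quarter ∧
    ((0 : ℤ), (0 : ℤ)) ∈ Q ∧ (GZ.induce (Quarter \ ↑Q)).Connected

/-
Corner compatibility places a copy `Q` of the polyomino in the quarter plane with the corner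
cell occupied and the empty cells of the quarter connected. Among the cells of `Q` touching an
empty cell of the quarter, remove one, `c`, at maximal distance from the corner inside `Q`. Any
connected piece of `Q - c` contains such a boundary cell: its rightmost-then-lowest cell has an
empty east or south neighbour, since `c` cannot be both. A shortest path in `Q` from the corner
to a boundary cell other than `c` avoids `c` by maximality, so `Q - c` is connected. The empty
cells of the quarter stay connected since `c` touches one of them, and corner compatibility
implies hole-freeness because every empty cell then reaches the outside of the quarter.
-/

namespace GZ

@[simp] lemma adj_iff {u v : ℤ × ℤ} : GZ.Adj u v ↔ |u.1 - v.1| + |u.2 - v.2| = 1 := Iff.rfl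

def rotation : GZ ≃g GZ where
  toFun q := (-q.2, q.1)
  invFun q := (q.2, -q.1)
  left_inv _ := by simp
  right_inv _ := by simp
  map_rel_iff' {u v} := by
    simp only [Equiv.coe_fn_mk, adj_iff, neg_sub_neg, abs_sub_comm u.2, add_comm]

def reflection : GZ ≃g GZ where
  toFun q := (q.1, -q.2)
  invFun q := (q.1, -q.2)
  left_inv _ := by simp
  right_inv _ := by simp
  map_rel_iff' {u v} := by
    simp only [Equiv.coe_fn_mk, adj_iff, neg_sub_neg, abs_sub_comm u.2]

def translation (t : ℤ × ℤ) : GZ ≃g GZ where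
  toEquiv := Equiv.addRight t
  map_rel_iff' := by simp

lemma coe_pow (e : GZ ≃g GZ) (r : ℕ) : ⇑(e ^ r) = (⇑e)^[r] := by
  induction r with
  | zero => rfl
  | succ r ih => rw [pow_succ', RelIso.coe_mul, ih, Function.iterate_succ']

def isoCopyMap (t : ℤ × ℤ) (r : ℕ) (s : Bool) : GZ ≃g GZ :=
  translation t * rotation ^ r * (if s then reflection else 1)

lemma coe_isoCopyMap (t : ℤ × ℤ) (r : ℕ) (s : Bool) :
    ⇑(isoCopyMap t r s) = fun p =>
      ((fun q : ℤ × ℤ => (-q.2, q.1))^[r] (if s then (p.1, -p.2) else p)) + t := by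
  funext p
  cases s <;> simp [isoCopyMap, coe_pow, translation, rotation, reflection]

end GZ

lemma isoCopy_iff {P Q : Finset (ℤ × ℤ)} :
    IsoCopy P Q ↔ ∃ t r s, Q = P.image (GZ.isoCopyMap t r s) := by
  simp only [IsoCopy, GZ.coe_isoCopyMap]

namespace SimpleGraph

variable {V : Type*} {G : SimpleGraph V}

lemma Reachable.induce_mono {s t : Set V} (hst : s ⊆ t) {u v : V} {hu : u ∈ s} {hv : v ∈ s}
    (h : (G.induce s).Reachable ⟨u, hu⟩ ⟨v, hv⟩) :
    (G.induce t).Reachable ⟨u, hst hu⟩ ⟨v, hst hv⟩ :=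
  h.map (G.induceHomOfLE hst).toHom

lemma induce_reachable_of_adj {s : Set V} {u v : V} (hu : u ∈ s) (hv : v ∈ s) (h : G.Adj u v) :
    (G.induce s).Reachable ⟨u, hu⟩ ⟨v, hv⟩ :=
  (induce_adj.2 h).reachable

lemma induce_reachable_of_exists_adj_lt {s : Set V} {z : V} (hz : z ∈ s) (f : V → ℕ)
    (hf : ∀ w ∈ s, w ≠ z → ∃ w' ∈ s, G.Adj w w' ∧ f w' < f w) {w : V} (hw : w ∈ s) :
    (G.induce s).Reachable ⟨w, hw⟩ ⟨z, hz⟩ := by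
  induction hn : f w using Nat.strong_induction_on generalizing w with
  | _ n ih =>
    by_cases hwz : w = z
    · subst hwz; rfl
    obtain ⟨w', hw', hadj, hlt⟩ := hf w hw hwz
    exact (induce_reachable_of_adj hw hw' hadj).trans (ih _ (hn ▸ hlt) hw' rfl)

lemma Walk.reachable_induce_diff_singleton {s : Set V} {u v : s} (p : (G.induce s).Walk u v)
    {c : V} (hp : ∀ x ∈ p.support, x.1 ≠ c) :
    (G.induce (s \ {c})).Reachable ⟨u, u.2, hp u p.start_mem_support⟩
      ⟨v, v.2, hp v p.end_mem_support⟩ :=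
  ⟨(p.map (Embedding.induce s).toHom).induce (s \ {c}) (by
    simp only [support_map, List.mem_map]
    rintro _ ⟨x, hx, rfl⟩
    exact ⟨x.2, hp x hx⟩)⟩

lemma Reachable.exists_walk_not_mem_support {o c w : V} (h : G.Reachable o w) (hwc : w ≠ c)
    (hle : G.dist o w ≤ G.dist o c) : ∃ p : G.Walk o w, c ∉ p.support := by
  classical
  obtain ⟨p, hp⟩ := h.exists_walk_length_eq_dist
  refine ⟨p, fun hc => ?_⟩
  have := (dist_le (p.takeUntil c hc)).trans_lt (p.length_takeUntil_lt_length hc hwc.symm)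
  omega

lemma Connected.exists_mem_avoidable [Finite V] (hG : G.Connected) (o : V) {B : Set V}
    (hB : ∃ b ∈ B, b ≠ o) :
    ∃ c ∈ B, c ≠ o ∧ ∀ w ∈ B, w ≠ c → ∃ p : G.Walk o w, c ∉ p.support := by
  obtain ⟨b, hbB, hbo⟩ := hB
  obtain ⟨c, hcB, hmax⟩ := B.exists_max_image (G.dist o) B.toFinite ⟨b, hbB⟩
  refine ⟨c, hcB, fun hco => hbo ?_, fun w hw hwc =>
    (hG.preconnected o w).exists_walk_not_mem_support hwc (hmax w hw)⟩
  have := hmax b hbB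
  rw [hco, dist_self, Nat.le_zero, (hG.preconnected _ _).dist_eq_zero_iff] at this
  exact this.symm

end SimpleGraph

lemma isPolyomino_image_iff (F : GZ ≃g GZ) {P : Finset (ℤ × ℤ)} :
    IsPolyomino (P.image F) ↔ IsPolyomino P := by
  suffices h : ∀ (F : GZ ≃g GZ) (P : Finset (ℤ × ℤ)), IsPolyomino P → IsPolyomino (P.image F) by
    refine ⟨fun hP => ?_, h F P⟩
    simpa [Finset.image_image] using h F.symm _ hP
  rintro F P ⟨hne, hconn⟩
  refine ⟨hne.image F, hconn.map (SimpleGraph.induceHom F.toHom fun z hz => ?_) ?_⟩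
  · exact Finset.mem_image_of_mem F hz
  · rintro ⟨y, hy⟩
    obtain ⟨x, hx, rfl⟩ := Finset.mem_image.1 hy
    exact ⟨⟨x, hx⟩, rfl⟩

lemma holeFree_image_iff (F : GZ ≃g GZ) {P : Finset (ℤ × ℤ)} :
    HoleFree (P.image F) ↔ HoleFree P := by
  suffices h : ∀ (F : GZ ≃g GZ) (P : Finset (ℤ × ℤ)), HoleFree P → HoleFree (P.image F) by
    refine ⟨fun hP => ?_, h F P⟩
    simpa [Finset.image_image] using h F.symm _ hP
  intro F P hP v hv
  have hmaps : Set.MapsTo F {z | z ∉ P} {z | z ∉ P.image F} := fun z hz h =>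
    hz (F.injective.mem_finset_image.1 h)
  have hv' : F.symm v ∉ P := fun h => hv (Finset.mem_image.2 ⟨_, h, F.apply_symm_apply v⟩)
  refine ((hP _ hv').image F.injective.injOn).mono ?_
  rintro _ ⟨u, ⟨hu, hreach⟩, rfl⟩
  refine ⟨hmaps hu, ?_⟩
  convert hreach.map (SimpleGraph.induceHom F.toHom hmaps) using 2
  · simp
  · rfl

lemma exists_east_south_not_mem {C : Set (ℤ × ℤ)} (hC : C.Finite) (hne : C.Nonempty) :
    ∃ w ∈ C, (w.1 + 1, w.2) ∉ C ∧ (w.1, w.2 - 1) ∉ C := by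
  obtain ⟨w, hw, hmax⟩ := C.exists_max_image (fun p => toLex (p.1, -p.2)) hC hne
  refine ⟨w, hw, fun h => ?_, fun h => ?_⟩ <;>
  · have := hmax _ h
    simp only [Prod.Lex.toLex_le_toLex] at this
    omega

lemma reachable_compl_quarter {w : ℤ × ℤ} (hw : w ∈ Quarterᶜ) :
    (GZ.induce Quarterᶜ).Reachable ⟨w, hw⟩ ⟨(-1, 1), by simp [Quarter]⟩ := by
  refine SimpleGraph.induce_reachable_of_exists_adj_lt _
    (fun w => (w.1 + 1).natAbs + (w.2 - 1).natAbs) (fun w hw hne => ?_) hw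
  simp only [Quarter, Set.mem_compl_iff, Set.mem_ofPred_eq, not_and_or, not_le] at hw ⊢
  have hne' : w.1 ≠ -1 ∨ w.2 ≠ 1 := by
    by_contra! h
    exact hne (Prod.ext h.1 h.2)
  rcases lt_trichotomy w.1 (-1) with h1 | h1 | h1
  · exact ⟨(w.1 + 1, w.2), by omega, by simp, by omega⟩
  · rcases lt_or_gt_of_ne (hne'.resolve_left (by omega)) with h2 | h2
    · exact ⟨(w.1, w.2 + 1), by omega, by simp, by omega⟩
    · exact ⟨(w.1, w.2 - 1), by omega, by simp, by omega⟩
  · exact ⟨(w.1 - 1, w.2), by omega, by simp, by omega⟩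

lemma holeFree_of_subset_quarter {Q : Finset (ℤ × ℤ)} (hQ : ↑Q ⊆ Quarter)
    (hR : (GZ.induce (Quarter \ ↑Q)).Connected) : HoleFree Q := by
  intro v hv
  have hout : Quarterᶜ ⊆ {z | z ∉ Q} := fun z hz h => hz (hQ h)
  have hcorner : ((-1 : ℤ), (1 : ℤ)) ∈ Quarterᶜ := by simp [Quarter]
  obtain ⟨M, hM⟩ := (Q.image Prod.fst).exists_le
  have hfar : (|M| + 1, (0 : ℤ)) ∈ Quarter \ ↑Q := by
    refine ⟨⟨by positivity, le_rfl⟩, fun h => ?_⟩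
    have := hM _ (Finset.mem_image_of_mem Prod.fst h)
    have := le_abs_self M
    simp only at *
    omega
  have hv_corner : (GZ.induce {z | z ∉ Q}).Reachable ⟨v, hv⟩ ⟨(-1, 1), hout hcorner⟩ := by
    by_cases hvq : v ∈ Quarter
    · have hup : (|M| + 1, (1 : ℤ)) ∈ Quarterᶜ := by simp [Quarter]
      exact ((hR.preconnected ⟨v, hvq, hv⟩ ⟨_, hfar⟩).induce_mono fun z hz => hz.2).trans <|
        (SimpleGraph.induce_reachable_of_adj hfar.2 (hout hup) (by simp)).trans <|
          (reachable_compl_quarter hup).induce_mono hout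
    · exact (reachable_compl_quarter hvq).induce_mono hout
  have hinf : Quarterᶜ.Infinite := by
    refine Set.infinite_of_injective_forall_mem (f := fun k : ℕ => ((-1 : ℤ), (k : ℤ))) ?_ ?_
    · intro i j h
      simpa using h
    · intro k
      simp [Quarter]
  refine hinf.mono fun u hu => ⟨hout hu, hv_corner.trans ?_⟩
  exact ((reachable_compl_quarter hu).induce_mono hout).symm

lemma CornerCompatible.holeFree {P : Finset (ℤ × ℤ)} (h : CornerCompatible P) : HoleFree P := by
  obtain ⟨Q, hiso, hQ, -, hR⟩ := h
  obtain ⟨t, r, s, rfl⟩ := isoCopy_iff.1 hiso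
  exact (holeFree_image_iff _).1 (holeFree_of_subset_quarter hQ hR)

def quarterBoundary (Q : Finset (ℤ × ℤ)) : Set (ℤ × ℤ) :=
  {w | w ∈ Q ∧ ∃ v ∈ Quarter \ ↑Q, GZ.Adj w v}

lemma mem_quarterBoundary_of_east_or_south {Q : Finset (ℤ × ℤ)} (hQ : ↑Q ⊆ Quarter)
    {w : ℤ × ℤ} (hw : w ∈ Q) (h : (w.1 + 1, w.2) ∉ Q ∨ (w.1, w.2 - 1) ∉ Q) :
    w ∈ quarterBoundary Q := by
  have hwq : w ∈ Quarter := hQ hw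
  simp only [Quarter, Set.mem_ofPred_eq] at hwq
  refine ⟨hw, ?_⟩
  rcases h with h | h
  · exact ⟨(w.1 + 1, w.2), ⟨⟨by omega, hwq.2⟩, h⟩, by simp⟩
  · exact ⟨(w.1, w.2 - 1), ⟨⟨hwq.1, by omega⟩, h⟩, by simp⟩

lemma exists_mem_quarterBoundary_ne_zero {Q : Finset (ℤ × ℤ)} (hQ : ↑Q ⊆ Quarter)
    (hcard : 2 ≤ Q.card) : ∃ b ∈ quarterBoundary Q, b ≠ 0 := by
  have hne : (↑Q \ {0} : Set (ℤ × ℤ)).Nonempty := by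
    obtain ⟨b, hb, hb0⟩ := Q.exists_mem_ne hcard 0
    exact ⟨b, hb, hb0⟩
  obtain ⟨w, ⟨hw, hw0⟩, he, -⟩ := exists_east_south_not_mem Q.finite_toSet.sdiff hne
  refine ⟨w, mem_quarterBoundary_of_east_or_south hQ hw (Or.inl fun h => he ⟨h, ?_⟩), hw0⟩
  have := (hQ hw).1
  simp only [Set.mem_singleton_iff, Prod.ext_iff, Prod.fst_zero, Prod.snd_zero, not_and]
  omega

lemma connected_erase_of_reachable_quarterBoundary {Q : Finset (ℤ × ℤ)} (hQ : ↑Q ⊆ Quarter)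
    {o c : ℤ × ℤ} (ho : o ∈ (↑Q \ {c} : Set (ℤ × ℤ)))
    (h : ∀ w (hw : w ∈ (↑Q \ {c} : Set (ℤ × ℤ))), w ∈ quarterBoundary Q →
      (GZ.induce (↑Q \ {c})).Reachable ⟨o, ho⟩ ⟨w, hw⟩) :
    (GZ.induce (↑Q \ {c})).Connected := by
  refine (SimpleGraph.connected_iff_exists_forall_reachable _).2 ⟨⟨o, ho⟩, fun ⟨a, ha⟩ => ?_⟩
  set C := {z | ∃ hz : z ∈ (↑Q \ {c} : Set (ℤ × ℤ)),
    (GZ.induce (↑Q \ {c})).Reachable ⟨a, ha⟩ ⟨z, hz⟩}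
  have hC : C.Finite := Q.finite_toSet.subset fun z ⟨hz, _⟩ => hz.1
  obtain ⟨w, ⟨hw, haw⟩, he, hs⟩ := exists_east_south_not_mem hC ⟨a, ha, .refl _⟩
  suffices w ∈ quarterBoundary Q from (h w hw this).trans haw.symm
  have hclosed : ∀ z ∉ C, GZ.Adj w z → z ∈ Q → z = c := fun z hzC hwz hz => by
    by_contra hzc
    exact hzC ⟨⟨hz, hzc⟩, haw.trans (SimpleGraph.induce_reachable_of_adj hw ⟨hz, hzc⟩ hwz)⟩
  apply mem_quarterBoundary_of_east_or_south hQ hw.1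
  by_contra! ⟨he', hs'⟩
  have := (hclosed _ he (by simp) he').trans (hclosed _ hs (by simp) hs').symm
  simp [Prod.ext_iff] at this

lemma connected_quarter_diff_erase {Q : Finset (ℤ × ℤ)} (hQ : ↑Q ⊆ Quarter)
    (hR : (GZ.induce (Quarter \ ↑Q)).Connected) {c : ℤ × ℤ} (hc : c ∈ quarterBoundary Q) :
    (GZ.induce (Quarter \ ↑(Q.erase c))).Connected := by
  obtain ⟨hcQ, v, hv, hcv⟩ := hc
  have hcq : c ∈ Quarter := hQ hcQ
  have : Quarter \ ↑(Q.erase c) = (Quarter \ ↑Q) ∪ {c} := by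
    ext z
    by_cases hz : z = c
    · subst hz; simp [hcq]
    · simp [hz]
  rw [this]
  exact SimpleGraph.connected_induce_union hR.preconnected .of_subsingleton hv rfl hcv.symm

theorem exists_removable_of_subset_quarter {Q : Finset (ℤ × ℤ)} (hQ : ↑Q ⊆ Quarter)
    (h0 : 0 ∈ Q) (hconn : (GZ.induce ↑Q).Connected) (hR : (GZ.induce (Quarter \ ↑Q)).Connected)
    (hcard : 2 ≤ Q.card) :
    ∃ c ∈ Q, 0 ∈ Q.erase c ∧ (GZ.induce ↑(Q.erase c)).Connected ∧
      (GZ.induce (Quarter \ ↑(Q.erase c))).Connected := by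
  obtain ⟨b, hb, hb0⟩ := exists_mem_quarterBoundary_ne_zero hQ hcard
  obtain ⟨⟨c, hcQ⟩, hc, hc0, hwalk⟩ := hconn.exists_mem_avoidable ⟨0, h0⟩
    (B := {x | x.1 ∈ quarterBoundary Q}) ⟨⟨b, hb.1⟩, hb, fun h => hb0 congr($h.1)⟩
  have h0c : (0 : ℤ × ℤ) ≠ c := fun h => hc0 (Subtype.ext h.symm)
  refine ⟨c, hcQ, Finset.mem_erase.2 ⟨h0c, h0⟩, ?_, connected_quarter_diff_erase hQ hR hc⟩
  rw [Finset.coe_erase]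
  refine connected_erase_of_reachable_quarterBoundary hQ ⟨h0, h0c⟩ fun w hw hwB => ?_
  obtain ⟨hwQ, hwc⟩ := hw
  obtain ⟨p, hp⟩ := hwalk ⟨w, hwQ⟩ hwB fun h => hwc congr($h.1)
  refine p.reachable_induce_diff_singleton fun x hx hxc => hp ?_
  obtain rfl : x = ⟨c, hcQ⟩ := Subtype.ext hxc
  exact hx

theorem polyomino_removable_cell_general
    (P : Finset (ℤ × ℤ)) (hP : IsPolyomino P)
    (hcorner : CornerCompatible P) (hcard : 2 ≤ P.card) :
    ∃ c ∈ P, IsPolyomino (P.erase c) ∧ HoleFree (P.erase c) ∧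
      CornerCompatible (P.erase c) := by
  obtain ⟨Q, hiso, hQ, h0, hR⟩ := hcorner
  obtain ⟨t, r, s, rfl⟩ := isoCopy_iff.1 hiso
  set F := GZ.isoCopyMap t r s
  obtain ⟨c', hc', h0', hconn, hR'⟩ := exists_removable_of_subset_quarter hQ h0
    ((isPolyomino_image_iff F).2 hP).2 hR (by rwa [Finset.card_image_of_injective _ F.injective])
  obtain ⟨c, hc, rfl⟩ := Finset.mem_image.1 hc'
  rw [← Finset.image_erase F.injective] at h0' hconn hR'
  have hcorner' : CornerCompatible (P.erase c) :=
    ⟨_, isoCopy_iff.2 ⟨t, r, s, rfl⟩, (Finset.coe_subset.2 (Finset.image_subset_image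
      (P.erase_subset c))).trans hQ, h0', hR'⟩
  exact ⟨c, hc, (isPolyomino_image_iff F).1 ⟨⟨0, h0'⟩, hconn⟩, hcorner'.holeFree, hcorner'⟩

/-- Every hole-free corner-compatible polyomino of size at least 2 contains a
cell whose removal yields a hole-free corner-compatible polyomino. -/
theorem polyomino_removable_cell
    (P : Finset (ℤ × ℤ)) (hP : IsPolyomino P) (hhole : HoleFree P)
    (hcorner : CornerCompatible P) (hcard : 2 ≤ P.card) :
    ∃ c ∈ P, IsPolyomino (P.erase c) ∧ HoleFree (P.erase c) ∧
      CornerCompatible (P.erase c) :=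
  polyomino_removable_cell_general P hP hcorner hcard
end

section
/- The Z-tetromino does not tile any rectangle: no rectangle can be partitioned into isometric copies of the S/Z-shaped tetromino. In particular, in any partial tiling of a horizontal strip of height 2 by Z-tetrominoes starting from the left edge, some cell adjacent to the left boundary or bottom row can never be covered without the piece exceeding the strip on the left or bottom. -/
/-- `P` tiles the region `X`: `X` can be partitioned into isometric copies of `P`. -/
def Tiles (P : Finset (ℤ × ℤ)) (X : Set (ℤ × ℤ)) : Prop :=
  ∃ C : Set (Finset (ℤ × ℤ)),
    (∀ Q ∈ C, IsoCopy P Q) ∧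
    (∀ z : ℤ × ℤ, z ∈ X ↔ ∃ Q ∈ C, z ∈ Q) ∧
    (∀ Q ∈ C, ∀ Q' ∈ C, Q ≠ Q' → ∀ z : ℤ × ℤ, z ∈ Q → z ∉ Q')

/-- The `n × m` rectangle `[1,n] × [1,m]` of `ℤ²`. -/
def Rect (n m : ℕ) : Set (ℤ × ℤ) :=
  {z | 1 ≤ z.1 ∧ z.1 ≤ (n : ℤ) ∧ 1 ≤ z.2 ∧ z.2 ≤ (m : ℤ)}

/-- The Z-tetromino. -/
def Ztet : Finset (ℤ × ℤ) :=
  {((0 : ℤ), (0 : ℤ)), (1, 0), (1, 1), (2, 1)}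


/-! The cell in the lower-left corner of the region is covered either by a flat Z lying on the
bottom row or by an upright S standing on it. Next to the upright S, and next to any flat Z on
the bottom row, the bottom row has a notch that only a flat Z can fill. So the bottom row carries
flat Z's at `c, c + 2, c + 4, …` and the region is unbounded to the right. In a band of height
two the upright S does not fit, and the cell above the corner can only be covered by a flat S,
which overlaps the flat Z in the corner. -/

structure IsTiling (P : Finset (ℤ × ℤ)) (C : Set (Finset (ℤ × ℤ))) (X : Set (ℤ × ℤ)) : Prop where
  isoCopy : ∀ Q ∈ C, IsoCopy P Q
  mem_iff : ∀ z, z ∈ X ↔ ∃ Q ∈ C, z ∈ Q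
  disjoint : ∀ Q ∈ C, ∀ Q' ∈ C, Q ≠ Q' → ∀ z, z ∈ Q → z ∉ Q'

lemma exists_isTiling_of_tiles {P : Finset (ℤ × ℤ)} {X : Set (ℤ × ℤ)} (h : Tiles P X) :
    ∃ C, IsTiling P C X :=
  let ⟨C, hiso, hmem, hdisj⟩ := h
  ⟨C, hiso, hmem, hdisj⟩

namespace IsTiling

variable {P Q Q' : Finset (ℤ × ℤ)} {C : Set (Finset (ℤ × ℤ))} {X : Set (ℤ × ℤ)} {z : ℤ × ℤ}

lemma mem_of_mem (hC : IsTiling P C X) (hQ : Q ∈ C) (hz : z ∈ Q) : z ∈ X :=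
  (hC.mem_iff z).2 ⟨Q, hQ, hz⟩

lemma eq_of_mem (hC : IsTiling P C X) (hQ : Q ∈ C) (hQ' : Q' ∈ C) (hz : z ∈ Q) (hz' : z ∈ Q') :
    Q = Q' := by
  by_contra hne
  exact hC.disjoint Q hQ Q' hQ' hne z hz hz'

end IsTiling

namespace Ztet

/-- `hZ` is the tetromino `Ztet` itself and `vZ` its quarter turn, `hS` and `vS` are their mirror
images; `piece o a b` is the copy whose bounding box has lower-left corner `(a, b)`. -/
inductive Orientation
  | hZ | hS | vZ | vS

def piece : Orientation → ℤ → ℤ → Finset (ℤ × ℤ)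
  | .hZ, a, b => {(a, b), (a + 1, b), (a + 1, b + 1), (a + 2, b + 1)}
  | .hS, a, b => {(a, b + 1), (a + 1, b + 1), (a + 1, b), (a + 2, b)}
  | .vZ, a, b => {(a, b + 1), (a, b + 2), (a + 1, b), (a + 1, b + 1)}
  | .vS, a, b => {(a, b), (a, b + 1), (a + 1, b + 1), (a + 1, b + 2)}

lemma exists_piece_of_isoCopy {Q : Finset (ℤ × ℤ)} (h : IsoCopy Ztet Q) :
    ∃ o a b, Q = piece o a b := by
  obtain ⟨⟨t₁, t₂⟩, r, s, rfl⟩ := h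
  have hperiodic : ∀ q, Function.IsPeriodicPt (fun q : ℤ × ℤ => (-q.2, q.1)) 4 q := fun q => by
    simp [Function.IsPeriodicPt, Function.IsFixedPt, Function.iterate_succ_apply']
  simp only [← (hperiodic _).iterate_mod_apply r]
  have hr : r % 4 < 4 := Nat.mod_lt r (by norm_num)
  interval_cases r % 4 <;> cases s <;>
    simp only [Function.iterate_succ_apply', Function.iterate_zero_apply]
  · exact ⟨.hZ, t₁, t₂, by ext ⟨x, y⟩; simp [piece, Ztet]; omega⟩
  · exact ⟨.hS, t₁, t₂ - 1, by ext ⟨x, y⟩; simp [piece, Ztet]; omega⟩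
  · exact ⟨.vZ, t₁ - 1, t₂, by ext ⟨x, y⟩; simp [piece, Ztet]; omega⟩
  · exact ⟨.vS, t₁, t₂, by ext ⟨x, y⟩; simp [piece, Ztet]; omega⟩
  · exact ⟨.hZ, t₁ - 2, t₂ - 1, by ext ⟨x, y⟩; simp [piece, Ztet]; omega⟩
  · exact ⟨.hS, t₁ - 2, t₂, by ext ⟨x, y⟩; simp [piece, Ztet]; omega⟩
  · exact ⟨.vZ, t₁, t₂ - 2, by ext ⟨x, y⟩; simp [piece, Ztet]; omega⟩
  · exact ⟨.vS, t₁ - 1, t₂ - 2, by ext ⟨x, y⟩; simp [piece, Ztet]; omega⟩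

lemma piece_eq_of_mem_of_subset_quadrant {o : Orientation} {a b c d : ℤ}
    (hQ : ∀ z ∈ piece o a b, c ≤ z.1 ∧ d ≤ z.2) (hcd : (c, d) ∈ piece o a b) :
    piece o a b = piece .hZ c d ∨ piece o a b = piece .vS c d := by
  cases o <;>
    simp only [piece, Finset.mem_insert, Finset.mem_singleton, forall_eq_or_imp,
      forall_eq, Prod.mk.injEq] at hQ hcd <;>
    rcases hcd with ⟨rfl, rfl⟩ | ⟨rfl, rfl⟩ | ⟨rfl, rfl⟩ | ⟨rfl, rfl⟩ <;>
    first | exact .inl rfl | exact .inr rfl | (exfalso; omega)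

lemma piece_eq_hZ_of_notch {o : Orientation} {a b c d : ℤ}
    (hQ : ∀ z ∈ piece o a b, d ≤ z.2) (hcd : (c, d) ∈ piece o a b)
    (h₁ : (c - 1, d) ∉ piece o a b) (h₂ : (c - 1, d + 1) ∉ piece o a b)
    (h₃ : (c, d + 1) ∉ piece o a b) :
    piece o a b = piece .hZ c d := by
  cases o <;>
    simp only [piece, Finset.mem_insert, Finset.mem_singleton, forall_eq_or_imp,
      forall_eq, Prod.mk.injEq] at hQ hcd h₁ h₂ h₃ <;>
    rcases hcd with ⟨rfl, rfl⟩ | ⟨rfl, rfl⟩ | ⟨rfl, rfl⟩ | ⟨rfl, rfl⟩ <;>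
    first | rfl | (exfalso; omega)

lemma piece_eq_hS_of_subset_band {o : Orientation} {a b c d : ℤ}
    (hQ : ∀ z ∈ piece o a b, c ≤ z.1 ∧ d ≤ z.2 ∧ z.2 ≤ d + 1) (hcd : (c, d + 1) ∈ piece o a b) :
    piece o a b = piece .hS c d := by
  cases o <;>
    simp only [piece, Finset.mem_insert, Finset.mem_singleton, forall_eq_or_imp,
      forall_eq, Prod.mk.injEq] at hQ hcd <;>
    rcases hcd with ⟨rfl, h⟩ | ⟨rfl, h⟩ | ⟨rfl, h⟩ | ⟨rfl, h⟩ <;>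
    first | (obtain rfl : b = d := by omega); rfl | (exfalso; omega)

end Ztet

namespace IsTiling

open Ztet

variable {P : Finset (ℤ × ℤ)} {C : Set (Finset (ℤ × ℤ))} {X : Set (ℤ × ℤ)} {z : ℤ × ℤ} {c d : ℤ}

lemma exists_piece_mem (hC : IsTiling Ztet C X) (hz : z ∈ X) :
    ∃ o a b, piece o a b ∈ C ∧ z ∈ piece o a b := by
  obtain ⟨Q, hQ, hzQ⟩ := (hC.mem_iff z).1 hz
  obtain ⟨o, a, b, rfl⟩ := exists_piece_of_isoCopy (hC.isoCopy Q hQ)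
  exact ⟨o, a, b, hQ, hzQ⟩

lemma hZ_mem_or_vS_mem (hC : IsTiling Ztet C X) (hX : ∀ z ∈ X, c ≤ z.1 ∧ d ≤ z.2)
    (hcd : (c, d) ∈ X) : piece .hZ c d ∈ C ∨ piece .vS c d ∈ C := by
  obtain ⟨o, a, b, hQ, hcdQ⟩ := hC.exists_piece_mem hcd
  rcases piece_eq_of_mem_of_subset_quadrant (fun z hz => hX z (hC.mem_of_mem hQ hz)) hcdQ
    with h | h <;> rw [h] at hQ
  exacts [.inl hQ, .inr hQ]

lemma hZ_mem_of_notch (hC : IsTiling Ztet C X) (hX : ∀ z ∈ X, d ≤ z.2) (hP : P ∈ C)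
    (h₁ : (c - 1, d) ∈ P) (h₂ : (c - 1, d + 1) ∈ P) (h₃ : (c, d + 1) ∈ P) (h₄ : (c, d) ∉ P)
    (hcd : (c, d) ∈ X) : piece .hZ c d ∈ C := by
  obtain ⟨o, a, b, hQ, hcdQ⟩ := hC.exists_piece_mem hcd
  have hnot : ∀ z ∈ P, z ∉ piece o a b := fun z hzP hzQ =>
    h₄ (hC.eq_of_mem hQ hP hzQ hzP ▸ hcdQ)
  rwa [← piece_eq_hZ_of_notch (fun z hz => hX z (hC.mem_of_mem hQ hz)) hcdQ
    (hnot _ h₁) (hnot _ h₂) (hnot _ h₃)]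

lemma hZ_mem_add_two (hC : IsTiling Ztet C X) (hX : ∀ z ∈ X, d ≤ z.2)
    (hc : piece .hZ c d ∈ C) (hcd : (c + 2, d) ∈ X) : piece .hZ (c + 2) d ∈ C := by
  refine hC.hZ_mem_of_notch hX hc ?_ ?_ ?_ ?_ hcd <;> simp [piece] <;> omega

end IsTiling

namespace Ztet

theorem not_tiles_of_bounded {X : Set (ℤ × ℤ)} {a b N : ℤ}
    (hX : ∀ z ∈ X, a ≤ z.1 ∧ b ≤ z.2 ∧ z.1 ≤ N) (hab : (a, b) ∈ X)
    (hdown : ∀ c, (c, b + 1) ∈ X → (c, b) ∈ X) : ¬ Tiles Ztet X := by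
  intro hT
  obtain ⟨C, hC⟩ := exists_isTiling_of_tiles hT
  have hXb : ∀ z ∈ X, b ≤ z.2 := fun z hz => (hX z hz).2.1
  have hrow : ∃ c, piece .hZ c b ∈ C := by
    rcases hC.hZ_mem_or_vS_mem (fun z hz => ⟨(hX z hz).1, (hX z hz).2.1⟩) hab with h | h
    · exact ⟨a, h⟩
    · have hcell : (a + 1, b) ∈ X := hdown _ (hC.mem_of_mem h (by simp [piece]))
      refine ⟨a + 1, hC.hZ_mem_of_notch hXb h ?_ ?_ ?_ ?_ hcell⟩ <;> simp [piece]
  have hbdd : ∃ N, ∀ c, piece .hZ c b ∈ C → c ≤ N :=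
    ⟨N, fun c hc => (hX _ (hC.mem_of_mem hc (by simp [piece] : (c, b) ∈ _))).2.2⟩
  obtain ⟨c, hc, hmax⟩ := Int.exists_greatest_of_bdd hbdd hrow
  have hnext := hC.hZ_mem_add_two hXb hc (hdown _ (hC.mem_of_mem hc (by simp [piece])))
  linarith [hmax _ hnext]

theorem not_tiles_of_subset_band {X : Set (ℤ × ℤ)} {a b : ℤ}
    (hX : ∀ z ∈ X, a ≤ z.1 ∧ b ≤ z.2 ∧ z.2 ≤ b + 1) (h₀ : (a, b) ∈ X) (h₁ : (a, b + 1) ∈ X) :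
    ¬ Tiles Ztet X := by
  intro hT
  obtain ⟨C, hC⟩ := exists_isTiling_of_tiles hT
  rcases hC.hZ_mem_or_vS_mem (fun z hz => ⟨(hX z hz).1, (hX z hz).2.1⟩) h₀ with h | h
  · obtain ⟨o, a', b', hQ, hQ₁⟩ := hC.exists_piece_mem h₁
    rw [piece_eq_hS_of_subset_band (fun z hz => hX z (hC.mem_of_mem hQ hz)) hQ₁] at hQ
    have hsame := hC.eq_of_mem hQ h (z := (a + 1, b)) (by simp [piece]) (by simp [piece])
    have hmem : (a, b + 1) ∈ piece .hZ a b := hsame ▸ by simp [piece]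
    simp [piece] at hmem
  · have := (hX _ (hC.mem_of_mem h (z := (a + 1, b + 2)) (by simp [piece]))).2.2
    omega

end Ztet

/-- The Z-tetromino does not tile any (nonempty) rectangle; in particular it
cannot tile the height-2 half-strip bounded on the left and bottom. -/
theorem Z_tetromino_tiles_no_rectangle :
    (∀ n m : ℕ, 1 ≤ n → 1 ≤ m → ¬ Tiles Ztet (Rect n m)) ∧
    ¬ Tiles Ztet {z : ℤ × ℤ | 1 ≤ z.1 ∧ 1 ≤ z.2 ∧ z.2 ≤ 2} := by
  refine ⟨fun n m hn hm => ?_, ?_⟩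
  · apply Ztet.not_tiles_of_bounded (a := 1) (b := 1) (N := n)
    · rintro z ⟨h₁, h₂, h₃, -⟩
      exact ⟨h₁, h₃, h₂⟩
    · simp [Rect]
      omega
    · rintro c ⟨h₁, h₂, -, -⟩
      exact ⟨h₁, h₂, le_rfl, by simpa using hm⟩
  · apply Ztet.not_tiles_of_subset_band (a := 1) (b := 1)
    · rintro z ⟨h₁, h₂, h₃⟩
      exact ⟨h₁, h₂, h₃⟩
    all_goals simp
end
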